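/- arXiv:1509.00819 — 8 statements merged into one kernel-verified Lean document; each statement's English description precedes it below -/
import Mathlib

section
/- Let μ be a finite positive measure on [0,2π), n ≥ 1, and let φ_0, …, φ_{n−1} be polynomials with deg φ_j = j and positive leading coefficients that are orthonormal with respect to μ, i.e. ∫₀^{2π} φ_j(e^{iθ}) conj(φ_k(e^{iθ})) dμ(θ) = δ_{jk} for 0 ≤ j,k ≤ n−1. Let K_{n−1}(ξ, z) = Σ_{j=0}^{n−1} conj(φ_j(ξ)) φ_j(z) be the Christoffel–Darboux kernel. Let Φ_n be a monic polynomial of degree n with ∫₀^{2π} Φ_n(e^{iθ}) e^{−imθ} dμ(θ) = 0 for all 0 ≤ m < n. Suppose θ_1, …, θ_m ∈ [0,2π) (m < n) are distinct, ξ_k = e^{iθ_k}, the masses m_k ≥ 0, and K_{n−1}(ξ_j, ξ_l) = 0 whenever j ≠ l. Set η = μ + Σ_{k=1}^{m} m_k δ_{θ_k}. Then the monic degree-n polynomial Q(z) = Φ_n(z) − Σ_{k=1}^{m} [m_k Φ_n(ξ_k) / (1 + m_k K_{n−1}(ξ_k, ξ_k))] · K_{n−1}(ξ_k, z) satisfies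 ∫₀^{2π} Q(e^{iθ}) e^{−ilθ} dη(θ) = 0 for all 0 ≤ l < n; that is, Q is the monic orthogonal polynomial of degree n for η. -/
open MeasureTheory Polynomial Real Set

noncomputable section

lemma rakh_integrable_circle_comp (ν : Measure ℝ) [IsFiniteMeasure ν] (g : ℂ → ℂ)
    (hg : Continuous g) :
    Integrable (fun θ : ℝ => g (Complex.exp ((θ:ℂ) * Complex.I))) ν := by
  obtain ⟨C, hC⟩ := (isCompact_sphere (0:ℂ) 1).exists_bound_of_continuousOn hg.continuousOn
  refine Integrable.mono' (integrable_const C) ?_ ?_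
  · exact (hg.comp (by continuity)).aestronglyMeasurable
  · filter_upwards with θ
    exact hC _ (by simp [mem_sphere_iff_norm, Complex.norm_exp_ofReal_mul_I θ])

lemma rakh_exp_neg (l : ℕ) (θ : ℝ) :
    Complex.exp (-((l : ℝ) * θ : ℝ) * Complex.I)
      = (starRingEnd ℂ (Complex.exp ((θ:ℂ) * Complex.I)))^l := by
  rw [← Complex.exp_conj, ← Complex.exp_nat_mul]
  congr 1
  simp [Complex.conj_I]
  ring

lemma rakh_span {n : ℕ} (φ : ℕ → Polynomial ℂ)
    (hdeg : ∀ j < n, (φ j).degree = (j : WithBot ℕ))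
    (hlc : ∀ j < n, (φ j).leadingCoeff ≠ 0) :
    ∀ d : ℕ, ∀ p : Polynomial ℂ, p.natDegree ≤ d → p.degree < (n : WithBot ℕ) →
      p ∈ Submodule.span ℂ (Set.range fun i : Fin n => φ i) := by
  have key : ∀ (p : Polynomial ℂ), p ≠ 0 → p.degree < (n : WithBot ℕ) →
      p.natDegree < n ∧
      (p - C (p.leadingCoeff / (φ p.natDegree).leadingCoeff) * φ p.natDegree).degree
        < p.degree ∧
      C (p.leadingCoeff / (φ p.natDegree).leadingCoeff) * φ p.natDegree
        ∈ Submodule.span ℂ (Set.range fun i : Fin n => φ i) := by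
    intro p hp0 hpn
    have hdp : p.degree = (p.natDegree : WithBot ℕ) := degree_eq_natDegree hp0
    have hjn : p.natDegree < n := by
      have := hdp ▸ hpn
      exact_mod_cast this
    set j := p.natDegree
    have haz : p.leadingCoeff / (φ j).leadingCoeff ≠ 0 :=
      div_ne_zero (leadingCoeff_ne_zero.mpr hp0) (hlc j hjn)
    refine ⟨hjn, ?_, ?_⟩
    · apply degree_sub_lt _ hp0
      · simp only [leadingCoeff_mul, leadingCoeff_C]
        rw [div_mul_cancel₀ _ (hlc j hjn)]
      · rw [degree_C_mul haz, hdeg j hjn, hdp]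
    · have : φ j ∈ Set.range fun i : Fin n => φ i := ⟨⟨j, hjn⟩, rfl⟩
      have hmem := Submodule.subset_span (R := ℂ) this
      have := Submodule.smul_mem _ (p.leadingCoeff / (φ j).leadingCoeff) hmem
      simpa [Polynomial.smul_eq_C_mul] using this
  intro d
  induction d with
  | zero =>
    intro p hpd hpn
    rcases eq_or_ne p 0 with rfl | hp0
    · exact Submodule.zero_mem _
    obtain ⟨hjn, hlt, hmem⟩ := key p hp0 hpn
    have hdp : p.degree = ((0:ℕ) : WithBot ℕ) := by
      rw [degree_eq_natDegree hp0, Nat.le_zero.mp hpd]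
    have hq0 : p - C (p.leadingCoeff / (φ p.natDegree).leadingCoeff) * φ p.natDegree = 0 := by
      rw [← degree_eq_bot]
      have := hlt.trans_eq hdp
      exact Nat.WithBot.lt_zero_iff.mp this
    have : p = C (p.leadingCoeff / (φ p.natDegree).leadingCoeff) * φ p.natDegree := by
      linear_combination (norm := ring_nf) hq0
    rw [this]; exact hmem
  | succ d ih =>
    intro p hpd hpn
    rcases eq_or_ne p 0 with rfl | hp0
    · exact Submodule.zero_mem _
    obtain ⟨hjn, hlt, hmem⟩ := key p hp0 hpn
    set q := p - C (p.leadingCoeff / (φ p.natDegree).leadingCoeff) * φ p.natDegree with hqdef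
    have hqn : q.degree < (n : WithBot ℕ) := hlt.trans hpn
    have hqd : q.natDegree ≤ d := by
      rcases eq_or_ne q 0 with h | h
      · simp [h]
      · have := natDegree_lt_natDegree h hlt
        omega
    have hqmem := ih q hqd hqn
    have : p = q + C (p.leadingCoeff / (φ p.natDegree).leadingCoeff) * φ p.natDegree := by
      rw [hqdef]; ring
    rw [this]
    exact Submodule.add_mem _ hqmem hmem

/-- Rakhmanov's formula: adding point masses at points where the Christoffel–Darboux
kernel vanishes pairwise, the new monic orthogonal polynomial is given explicitly. -/
theorem rakhmanov_formula
    (μ : Measure ℝ) [IsFiniteMeasure μ] (n : ℕ) (hn : 1 ≤ n)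
    (φ : ℕ → Polynomial ℂ)
    (hdeg : ∀ j < n, (φ j).degree = (j : WithBot ℕ))
    (hlead : ∀ j < n, ((φ j).leadingCoeff.im = 0 ∧ 0 < (φ j).leadingCoeff.re))
    (horth : ∀ j < n, ∀ k < n,
      ∫ θ : ℝ, (φ j).eval (Complex.exp (θ * Complex.I)) *
        starRingEnd ℂ ((φ k).eval (Complex.exp (θ * Complex.I))) ∂μ
        = if j = k then 1 else 0)
    (Φ : Polynomial ℂ) (hΦmonic : Φ.Monic) (hΦdeg : Φ.natDegree = n)
    (hΦorth : ∀ m < n,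
      ∫ θ : ℝ, Φ.eval (Complex.exp (θ * Complex.I)) *
        Complex.exp (-((m : ℝ) * θ : ℝ) * Complex.I) ∂μ = 0)
    (m : ℕ) (hm : m < n)
    (θs : Fin m → ℝ) (hθs : ∀ k, θs k ∈ Set.Ico (0 : ℝ) (2 * π))
    (hθdist : Function.Injective θs)
    (ξ : Fin m → ℂ) (hξ : ∀ k, ξ k = Complex.exp ((θs k : ℂ) * Complex.I))
    (mass : Fin m → ℝ) (hmass : ∀ k, 0 ≤ mass k)
    (hker : ∀ j l : Fin m, j ≠ l →
      (∑ i ∈ Finset.range n,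
        starRingEnd ℂ ((φ i).eval (ξ j)) * (φ i).eval (ξ l)) = 0)
    (η : Measure ℝ)
    (hη : η = μ + ∑ k : Fin m, (ENNReal.ofReal (mass k)) • Measure.dirac (θs k))
    (Q : Polynomial ℂ)
    (hQ : Q = Φ - ∑ k : Fin m,
      Polynomial.C ((mass k : ℂ) * Φ.eval (ξ k) /
        (1 + (mass k : ℂ) *
          ∑ i ∈ Finset.range n,
            starRingEnd ℂ ((φ i).eval (ξ k)) * (φ i).eval (ξ k))) *
      (∑ i ∈ Finset.range n,
        Polynomial.C (starRingEnd ℂ ((φ i).eval (ξ k))) * φ i)) :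
    Q.Monic ∧ Q.natDegree = n ∧
    ∀ l < n, ∫ θ : ℝ, Q.eval (Complex.exp (θ * Complex.I)) *
      Complex.exp (-((l : ℝ) * θ : ℝ) * Complex.I) ∂η = 0 := by
  classical
  -- abbreviations
  set α : Fin m → ℂ := fun k => (mass k : ℂ) * Φ.eval (ξ k) /
        (1 + (mass k : ℂ) *
          ∑ i ∈ Finset.range n,
            starRingEnd ℂ ((φ i).eval (ξ k)) * (φ i).eval (ξ k)) with hα
  set Kp : Fin m → Polynomial ℂ := fun k => ∑ i ∈ Finset.range n,
        Polynomial.C (starRingEnd ℂ ((φ i).eval (ξ k))) * φ i with hKpdef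
  have hQ' : Q = Φ - ∑ k : Fin m, C (α k) * Kp k := hQ
  clear hQ
  have hlc : ∀ j < n, (φ j).leadingCoeff ≠ 0 := by
    intro j hj h
    have h2 := (hlead j hj).2
    rw [h] at h2
    simp at h2
  -- degrees
  have hKdeg : ∀ k, (Kp k).degree < (n : WithBot ℕ) := by
    intro k
    refine lt_of_le_of_lt (degree_sum_le _ _) ?_
    rw [Finset.sup_lt_iff (by exact_mod_cast WithBot.bot_lt_coe n)]
    intro i hi
    have hin : i < n := Finset.mem_range.mp hi
    calc (C (starRingEnd ℂ ((φ i).eval (ξ k))) * φ i).degree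
        ≤ (φ i).degree := by
          rw [← Polynomial.smul_eq_C_mul]; exact degree_smul_le _ _
      _ < (n : WithBot ℕ) := by rw [hdeg i hin]; exact_mod_cast hin
  have hSdeg : (∑ k : Fin m, C (α k) * Kp k).degree < (n : WithBot ℕ) := by
    refine lt_of_le_of_lt (degree_sum_le _ _) ?_
    rw [Finset.sup_lt_iff (by exact_mod_cast WithBot.bot_lt_coe n)]
    intro k _
    calc (C (α k) * Kp k).degree ≤ (Kp k).degree := by
          rw [← Polynomial.smul_eq_C_mul]; exact degree_smul_le _ _
      _ < (n : WithBot ℕ) := hKdeg k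
  have hdegΦ : Φ.degree = (n : WithBot ℕ) := by
    rw [degree_eq_natDegree hΦmonic.ne_zero, hΦdeg]
  have hQmonic : Q.Monic := by
    rw [hQ']
    exact hΦmonic.sub_of_left (by rw [hdegΦ]; exact hSdeg)
  have hQdeg : Q.natDegree = n := by
    have : Q.degree = (n : WithBot ℕ) := by
      rw [hQ', degree_sub_eq_left_of_degree_lt (by rw [hdegΦ]; exact hSdeg), hdegΦ]
    exact natDegree_eq_of_degree_eq_some this
  refine ⟨hQmonic, hQdeg, ?_⟩
  intro l hl
  -- nonvanishing of denominators
  have hD : ∀ k : Fin m, (1 + (mass k : ℂ) *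
      ∑ i ∈ Finset.range n, starRingEnd ℂ ((φ i).eval (ξ k)) * (φ i).eval (ξ k)) ≠ 0 := by
    intro k
    have hsum : (∑ i ∈ Finset.range n, starRingEnd ℂ ((φ i).eval (ξ k)) * (φ i).eval (ξ k))
        = ((∑ i ∈ Finset.range n, Complex.normSq ((φ i).eval (ξ k)) : ℝ) : ℂ) := by
      push_cast
      refine Finset.sum_congr rfl fun i _ => ?_
      rw [mul_comm, Complex.mul_conj]
    rw [hsum]
    have hS : (0:ℝ) ≤ ∑ i ∈ Finset.range n, Complex.normSq ((φ i).eval (ξ k)) :=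
      Finset.sum_nonneg fun i _ => Complex.normSq_nonneg _
    have hpos : (0:ℝ) < 1 + mass k * ∑ i ∈ Finset.range n, Complex.normSq ((φ i).eval (ξ k)) := by
      have := mul_nonneg (hmass k) hS
      linarith
    have hne : ((1 + mass k * ∑ i ∈ Finset.range n, Complex.normSq ((φ i).eval (ξ k)) : ℝ) : ℂ) ≠ 0 :=
      Complex.ofReal_ne_zero.mpr (ne_of_gt hpos)
    rwa [Complex.ofReal_add, Complex.ofReal_one, Complex.ofReal_mul] at hne
  -- integrability
  have hint : ∀ (p : Polynomial ℂ) (ν : Measure ℝ) [IsFiniteMeasure ν],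
      Integrable (fun θ : ℝ => p.eval (Complex.exp (θ * Complex.I)) *
        Complex.exp (-((l : ℝ) * θ : ℝ) * Complex.I)) ν := by
    intro p ν _
    have h := rakh_integrable_circle_comp ν
      (fun z => p.eval z * (starRingEnd ℂ z)^l)
      (p.continuous.mul (Complex.continuous_conj.pow l))
    simpa only [rakh_exp_neg l] using h
  have hint2 : ∀ p q : Polynomial ℂ,
      Integrable (fun θ : ℝ => p.eval (Complex.exp (θ * Complex.I)) *
        starRingEnd ℂ (q.eval (Complex.exp (θ * Complex.I)))) μ := by
    intro p q
    exact rakh_integrable_circle_comp μ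
      (fun z => p.eval z * starRingEnd ℂ (q.eval z))
      (p.continuous.mul (Complex.continuous_conj.comp q.continuous))
  -- expansion of X^l in the φ basis
  obtain ⟨c, hc⟩ := (Submodule.mem_span_range_iff_exists_fun ℂ).mp
    (rakh_span φ hdeg hlc l ((X : Polynomial ℂ)^l)
      (natDegree_X_pow_le l)
      (by rw [degree_X_pow]; exact_mod_cast hl))
  have hXl : ∀ z : ℂ, z ^ l = ∑ i : Fin n, c i * (φ i).eval z := by
    intro z
    have := congrArg (Polynomial.eval z) hc
    simpa [eval_finset_sum, smul_eq_mul] using this.symm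
  have hg : ∀ θ : ℝ, Complex.exp (-((l : ℝ) * θ : ℝ) * Complex.I)
      = ∑ i : Fin n, starRingEnd ℂ (c i) *
          starRingEnd ℂ ((φ i).eval (Complex.exp (θ * Complex.I))) := by
    intro θ
    rw [rakh_exp_neg l θ, ← map_pow, hXl, map_sum]
    simp [map_mul]
  -- per-φ integrals
  have hA : ∀ i : Fin n, ∫ θ : ℝ, (φ i).eval (Complex.exp (θ * Complex.I)) *
      Complex.exp (-((l : ℝ) * θ : ℝ) * Complex.I) ∂μ = starRingEnd ℂ (c i) := by
    intro i
    calc ∫ θ : ℝ, (φ i).eval (Complex.exp (θ * Complex.I)) *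
          Complex.exp (-((l : ℝ) * θ : ℝ) * Complex.I) ∂μ
        = ∫ θ : ℝ, ∑ j : Fin n, starRingEnd ℂ (c j) *
            ((φ i).eval (Complex.exp (θ * Complex.I)) *
              starRingEnd ℂ ((φ j).eval (Complex.exp (θ * Complex.I)))) ∂μ := by
          congr 1; funext θ
          rw [hg θ, Finset.mul_sum]
          exact Finset.sum_congr rfl fun j _ => by ring
      _ = ∑ j : Fin n, starRingEnd ℂ (c j) *
            ∫ θ : ℝ, (φ i).eval (Complex.exp (θ * Complex.I)) *
              starRingEnd ℂ ((φ j).eval (Complex.exp (θ * Complex.I))) ∂μ := by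
          have hswap := integral_finset_sum (μ := μ) Finset.univ
            (f := fun (j : Fin n) (θ : ℝ) => starRingEnd ℂ (c j) *
              ((φ i).eval (Complex.exp (θ * Complex.I)) *
                starRingEnd ℂ ((φ j).eval (Complex.exp (θ * Complex.I)))))
            (fun j _ => (hint2 (φ i) (φ j)).const_mul _)
          rw [hswap]
          exact Finset.sum_congr rfl fun j _ => integral_const_mul _ _
      _ = ∑ j : Fin n, starRingEnd ℂ (c j) * (if (i:ℕ) = (j:ℕ) then 1 else 0) := by
          exact Finset.sum_congr rfl fun j _ => by rw [horth i i.2 j j.2]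
      _ = starRingEnd ℂ (c i) := by
          simp [Fin.val_inj]
  -- kernel integrals
  have hKint : ∀ k : Fin m, ∫ θ : ℝ, (Kp k).eval (Complex.exp (θ * Complex.I)) *
      Complex.exp (-((l : ℝ) * θ : ℝ) * Complex.I) ∂μ = starRingEnd ℂ (ξ k ^ l) := by
    intro k
    have hKeval : ∀ z : ℂ, (Kp k).eval z
        = ∑ i : Fin n, starRingEnd ℂ ((φ i).eval (ξ k)) * (φ i).eval z := by
      intro z
      rw [hKpdef]
      simp only [eval_finset_sum, eval_mul, eval_C]
      rw [← Fin.sum_univ_eq_sum_range]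
    calc ∫ θ : ℝ, (Kp k).eval (Complex.exp (θ * Complex.I)) *
          Complex.exp (-((l : ℝ) * θ : ℝ) * Complex.I) ∂μ
        = ∫ θ : ℝ, ∑ i : Fin n, starRingEnd ℂ ((φ i).eval (ξ k)) *
            ((φ i).eval (Complex.exp (θ * Complex.I)) *
              Complex.exp (-((l : ℝ) * θ : ℝ) * Complex.I)) ∂μ := by
          congr 1; funext θ
          rw [hKeval, Finset.sum_mul]
          exact Finset.sum_congr rfl fun i _ => by ring
      _ = ∑ i : Fin n, starRingEnd ℂ ((φ i).eval (ξ k)) *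
            ∫ θ : ℝ, (φ i).eval (Complex.exp (θ * Complex.I)) *
              Complex.exp (-((l : ℝ) * θ : ℝ) * Complex.I) ∂μ := by
          have hswap := integral_finset_sum (μ := μ) Finset.univ
            (f := fun (i : Fin n) (θ : ℝ) => starRingEnd ℂ ((φ i).eval (ξ k)) *
              ((φ i).eval (Complex.exp (θ * Complex.I)) *
                Complex.exp (-((l : ℝ) * θ : ℝ) * Complex.I)))
            (fun i _ => (hint (φ i) μ).const_mul _)
          rw [hswap]
          exact Finset.sum_congr rfl fun i _ => integral_const_mul _ _
      _ = ∑ i : Fin n, starRingEnd ℂ ((φ i).eval (ξ k)) * starRingEnd ℂ (c i) := by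
          exact Finset.sum_congr rfl fun i _ => by rw [hA i]
      _ = starRingEnd ℂ (ξ k ^ l) := by
          rw [hXl (ξ k), map_sum]
          exact Finset.sum_congr rfl fun i _ => by rw [map_mul]; ring
  -- integral of Q against μ
  have hmuQ : ∫ θ : ℝ, Q.eval (Complex.exp (θ * Complex.I)) *
      Complex.exp (-((l : ℝ) * θ : ℝ) * Complex.I) ∂μ
      = - ∑ k : Fin m, α k * starRingEnd ℂ (ξ k ^ l) := by
    calc ∫ θ : ℝ, Q.eval (Complex.exp (θ * Complex.I)) *
          Complex.exp (-((l : ℝ) * θ : ℝ) * Complex.I) ∂μ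
        = ∫ θ : ℝ, (Φ.eval (Complex.exp (θ * Complex.I)) *
            Complex.exp (-((l : ℝ) * θ : ℝ) * Complex.I)
            - ∑ k : Fin m, α k * ((Kp k).eval (Complex.exp (θ * Complex.I)) *
              Complex.exp (-((l : ℝ) * θ : ℝ) * Complex.I))) ∂μ := by
          congr 1; funext θ
          rw [hQ']
          simp only [eval_sub, eval_finset_sum, eval_mul, eval_C]
          rw [sub_mul, Finset.sum_mul]
          congr 1
          exact Finset.sum_congr rfl fun k _ => by ring
      _ = (∫ θ : ℝ, Φ.eval (Complex.exp (θ * Complex.I)) *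
            Complex.exp (-((l : ℝ) * θ : ℝ) * Complex.I) ∂μ)
          - ∑ k : Fin m, α k * ∫ θ : ℝ, (Kp k).eval (Complex.exp (θ * Complex.I)) *
              Complex.exp (-((l : ℝ) * θ : ℝ) * Complex.I) ∂μ := by
          rw [integral_sub (hint Φ μ)
            (integrable_finset_sum _ fun k _ => (hint (Kp k) μ).const_mul _)]
          congr 1
          rw [integral_finset_sum _ fun k _ => (hint (Kp k) μ).const_mul _]
          exact Finset.sum_congr rfl fun k _ => integral_const_mul _ _
      _ = - ∑ k : Fin m, α k * starRingEnd ℂ (ξ k ^ l) := by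
          rw [hΦorth l hl, zero_sub]
          congr 1
          exact Finset.sum_congr rfl fun k _ => by rw [hKint k]
  -- evaluation of Q at the mass points
  have hQeval : ∀ j : Fin m, (mass j : ℂ) * Q.eval (ξ j) = α j := by
    intro j
    have hKpj : ∀ k : Fin m, k ≠ j → (Kp k).eval (ξ j) = 0 := by
      intro k hkj
      rw [hKpdef]
      simp only [eval_finset_sum, eval_mul, eval_C]
      exact hker k j hkj
    have hQj : Q.eval (ξ j) = Φ.eval (ξ j) - α j * (Kp j).eval (ξ j) := by
      rw [hQ']
      simp only [eval_sub, eval_finset_sum, eval_mul, eval_C]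
      congr 1
      rw [Finset.sum_eq_single j (fun k _ hkj => by rw [hKpj k hkj, mul_zero])
        (fun h => absurd (Finset.mem_univ j) h)]
    have hKjj : (Kp j).eval (ξ j)
        = ∑ i ∈ Finset.range n, starRingEnd ℂ ((φ i).eval (ξ j)) * (φ i).eval (ξ j) := by
      rw [hKpdef]
      simp only [eval_finset_sum, eval_mul, eval_C]
    rw [hQj, hKjj, hα]
    simp only []
    field_simp [hD j]
    ring_nf
  -- putting everything together
  rw [hη, integral_add_measure (hint Q μ)
    (integrable_finset_sum_measure.mpr fun k _ =>
      (hint Q (Measure.dirac (θs k))).smul_measure ENNReal.ofReal_ne_top),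
    integral_finset_sum_measure fun k _ =>
      (hint Q (Measure.dirac (θs k))).smul_measure ENNReal.ofReal_ne_top, hmuQ]
  have hpoint : ∀ k : Fin m, ∫ θ : ℝ, Q.eval (Complex.exp (θ * Complex.I)) *
      Complex.exp (-((l : ℝ) * θ : ℝ) * Complex.I)
      ∂((ENNReal.ofReal (mass k)) • Measure.dirac (θs k))
      = α k * starRingEnd ℂ (ξ k ^ l) := by
    intro k
    rw [integral_smul_measure, ENNReal.toReal_ofReal (hmass k),
      integral_dirac (fun θ : ℝ => Q.eval (Complex.exp (θ * Complex.I)) *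
        Complex.exp (-((l : ℝ) * θ : ℝ) * Complex.I)) (θs k)]
    rw [rakh_exp_neg l (θs k), ← map_pow, ← hξ k, Complex.real_smul]
    rw [← mul_assoc, hQeval k]
  rw [Finset.sum_congr rfl fun k _ => hpoint k]
  ring
end
end

section
/- Let μ be a probability measure on [0,2π) whose support is infinite, and let φ_N be its N-th orthonormal polynomial. Then φ_N(e^{iθ}) ≠ 0 for all θ, the measure dμ_N = dθ / (2π |φ_N(e^{iθ})|²) is a probability measure, and the trigonometric moments of μ_N and μ of order up to N coincide: ∫₀^{2π} e^{−ikθ} dμ_N(θ) = ∫₀^{2π} e^{−ikθ} dμ(θ) for every integer k with |k| ≤ N. -/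
open MeasureTheory Polynomial Real Set

noncomputable section

/-- `φ` is the `n`-th orthonormal polynomial for the measure `μ`
(viewed as a measure on the unit circle via `θ ↦ exp (i θ)`). -/
def IsOrthonormalPolynomial (μ : Measure ℝ) (n : ℕ) (φ : Polynomial ℂ) : Prop :=
  φ.degree = (n : WithBot ℕ) ∧ φ.leadingCoeff.im = 0 ∧ 0 < φ.leadingCoeff.re ∧
  (∀ m : ℕ, m < n →
    ∫ θ : ℝ, φ.eval (Complex.exp (θ * Complex.I)) *
      Complex.exp (-((m : ℝ) * θ : ℝ) * Complex.I) ∂μ = 0) ∧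
  ∫ θ : ℝ, ‖φ.eval (Complex.exp (θ * Complex.I))‖ ^ 2 ∂μ = 1

/-- the support of `μ` is infinite, i.e. `μ` is not concentrated on a finite set. -/
def HasInfiniteSupport (μ : Measure ℝ) : Prop := ∀ s : Finset ℝ, μ ((s : Set ℝ))ᶜ ≠ 0

/-- The Bernstein–Szegő measure `dθ/(2π |P(e^{iθ})|²)` of a polynomial `P`. -/
def bsMeasure (P : Polynomial ℂ) : Measure ℝ :=
  (volume.restrict (Set.Ico (0 : ℝ) (2 * π))).withDensity
    (fun θ => ENNReal.ofReal (1 / (2 * π * ‖P.eval (Complex.exp (θ * Complex.I))‖ ^ 2)))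


/-!
Let `φ^*(z) = z^N \overline{φ(1/\bar z)}`. Orthogonality pushes the zeros of `φ` into the open
unit disc: if `φ = (z - z₀) q` then `‖q‖² = ‖z q‖² = ‖φ‖² + |z₀|² ‖q‖²`. Hence `φ^*` has no zeros in
the closed disc and is coprime to `φ`. For every `Q` of degree `≤ N`, both `μ` and `μ_N` give
`⟨φ, Q⟩ = \overline{Q_N / φ_N}`: for `μ` by orthogonality and normalization, for `μ_N` because
the integrand is `Q^*(e^{iθ}) / (2π φ^*(e^{iθ}))` and the mean value property applies.
A Bézout identity `A φ^* + C φ = z^{N-k}` with `deg A, deg C ≤ N` gives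
`e^{-ikθ} = A \bar φ + φ \overline{C^*}` on the circle, so
`∫ e^{-ikθ} = \overline{⟨φ, A⟩} + ⟨φ, C^*⟩` is the same for both measures.
-/

namespace BernsteinSzego

open ComplexConjugate

def expI (θ : ℝ) : ℂ := Complex.exp (θ * Complex.I)

lemma norm_expI (θ : ℝ) : ‖expI θ‖ = 1 := Complex.norm_exp_ofReal_mul_I θ

@[fun_prop]
lemma continuous_expI : Continuous expI := by unfold expI; fun_prop

lemma expI_zero : expI 0 = 1 := by simp [expI]

lemma conj_expI (θ : ℝ) : conj (expI θ) = expI (-θ) := by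
  rw [expI, expI, ← Complex.exp_conj, map_mul, Complex.conj_ofReal, Complex.conj_I]
  push_cast
  ring_nf

lemma expI_neg_mul (k : ℕ) (θ : ℝ) : expI (-(k * θ)) = conj (expI θ) ^ k := by
  rw [expI, expI, ← Complex.exp_conj, ← Complex.exp_nat_mul]
  congr 1
  simp only [map_mul, Complex.conj_ofReal, Complex.conj_I]
  push_cast
  ring

/-- The reversed polynomial `P^*(z) = z^N \overline{P(1/\bar z)}`, for `P` of degree `≤ N`. -/
def conjReflect (N : ℕ) (P : ℂ[X]) : ℂ[X] := (P.reflect N).map (starRingEnd ℂ)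

section conjReflect

variable {N : ℕ} {P : ℂ[X]}

lemma natDegree_conjReflect_le (hP : P.natDegree ≤ N) : (conjReflect N P).natDegree ≤ N :=
  natDegree_map_le.trans (natDegree_reflect_le.trans (max_le le_rfl hP))

lemma conjReflect_eval_zero : (conjReflect N P).eval 0 = conj (P.coeff N) := by
  simp [conjReflect, ← coeff_zero_eq_eval_zero, coeff_reflect]

lemma conjReflect_eval_of_ne_zero (hP : P.natDegree ≤ N) {z : ℂ} (hz : z ≠ 0) :
    (conjReflect N P).eval z = z ^ N * conj (P.eval (conj z)⁻¹) := by
  let := invertibleOfNonzero (inv_ne_zero hz)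
  have h := eval₂_reflect_mul_pow (starRingEnd ℂ) z⁻¹ N P hP
  rw [invOf_eq_inv, inv_inv] at h
  rw [conjReflect, eval_map, ← map_inv₀, ← eval₂_at_apply, Complex.conj_conj, ← h, inv_pow,
    mul_left_comm, mul_inv_cancel₀ (pow_ne_zero _ hz), mul_one]

lemma conjReflect_eval_of_norm_eq_one (hP : P.natDegree ≤ N) {z : ℂ} (hz : ‖z‖ = 1) :
    (conjReflect N P).eval z = z ^ N * conj (P.eval z) := by
  rw [conjReflect_eval_of_ne_zero hP (norm_ne_zero_iff.mp (hz ▸ one_ne_zero)),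
    ← Complex.inv_eq_conj hz, inv_inv]

lemma conjReflect_eval_ne_zero (hP : P.natDegree ≤ N) (hN : P.coeff N ≠ 0)
    (hroots : ∀ z, P.eval z = 0 → ‖z‖ < 1) {z : ℂ} (hz : ‖z‖ ≤ 1) :
    (conjReflect N P).eval z ≠ 0 := by
  rcases eq_or_ne z 0 with rfl | hz0
  · simpa [conjReflect_eval_zero] using hN
  rw [conjReflect_eval_of_ne_zero hP hz0]
  refine mul_ne_zero (pow_ne_zero _ hz0) ((_root_.map_ne_zero _).mpr fun h => ?_)
  have := hroots _ h
  rw [norm_inv, RCLike.norm_conj, inv_lt_one₀ (norm_pos_iff.mpr hz0)] at this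
  exact this.not_ge hz

lemma isCoprime_conjReflect (hP : P.natDegree ≤ N) (hN : P.coeff N ≠ 0)
    (hroots : ∀ z, P.eval z = 0 → ‖z‖ < 1) : IsCoprime (conjReflect N P) P := by
  refine (isCoprime_iff_aeval_ne_zero_of_isAlgClosed ℂ ℂ _ _).mpr fun z => ?_
  simp only [coe_aeval_eq_eval]
  by_cases hz : P.eval z = 0
  · exact .inl (conjReflect_eval_ne_zero hP hN hroots (hroots z hz).le)
  · exact .inr hz

end conjReflect

lemma exists_mul_add_mul_eq_of_isCoprime {K : Type*} [Field K] {p q : K[X]} (hpq : IsCoprime p q)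
    (hq : q ≠ 0) (hp : p.natDegree ≤ q.natDegree) {r : K[X]} (hr : r.natDegree ≤ q.natDegree) :
    ∃ a b : K[X], a.natDegree ≤ q.natDegree ∧ b.natDegree ≤ q.natDegree ∧ a * p + b * q = r := by
  obtain ⟨u, v, huv⟩ := hpq
  set a := u * r % q
  set b := v * r + u * r / q * p
  have ha : a.natDegree ≤ q.natDegree := natDegree_le_natDegree (degree_mod_lt _ hq).le
  have hab : a * p + b * q = r := by
    linear_combination r * huv + p * EuclideanDomain.mod_add_div (u * r) q
  refine ⟨a, b, ha, ?_, hab⟩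
  rcases eq_or_ne b 0 with hb | hb
  · simp [hb]
  have : b.natDegree + q.natDegree ≤ 2 * q.natDegree := by
    rw [← natDegree_mul hb hq, show b * q = r - a * p by rw [← hab]; ring]
    exact (natDegree_sub_le _ _).trans (max_le (by omega) (natDegree_mul_le.trans (by omega)))
  omega

lemma integrable_comp_expI (ν : Measure ℝ) [IsFiniteMeasure ν] {f : ℂ → ℂ} (hf : Continuous f) :
    Integrable (fun θ => f (expI θ)) ν := by
  obtain ⟨C, hC⟩ := (isCompact_sphere (0 : ℂ) 1).exists_bound_of_continuousOn hf.continuousOn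
  exact (integrable_const C).mono' (hf.comp continuous_expI).aestronglyMeasurable
    (ae_of_all _ fun θ => hC _ (mem_sphere_zero_iff_norm.mpr (norm_expI θ)))

section circleForm

variable (ν : Measure ℝ) [IsFiniteMeasure ν]

lemma integrable_eval_mul_conj_eval (P Q : ℂ[X]) :
    Integrable (fun θ => P.eval (expI θ) * conj (Q.eval (expI θ))) ν :=
  integrable_comp_expI ν (f := fun z => P.eval z * conj (Q.eval z))
    (P.continuous.mul (Complex.continuous_conj.comp Q.continuous))

def circleForm : ℂ[X] →ₗ[ℂ] ℂ[X] →ₗ⋆[ℂ] ℂ :=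
  LinearMap.mk₂'ₛₗ (RingHom.id ℂ) (starRingEnd ℂ)
    (fun P Q => ∫ θ, P.eval (expI θ) * conj (Q.eval (expI θ)) ∂ν)
    (fun P₁ P₂ Q => by
      simp only [eval_add, add_mul]
      exact integral_add (integrable_eval_mul_conj_eval ν _ _)
        (integrable_eval_mul_conj_eval ν _ _))
    (fun c P Q => by simp only [eval_smul, smul_eq_mul, mul_assoc, integral_const_mul]; rfl)
    (fun P Q₁ Q₂ => by
      simp only [eval_add, map_add, mul_add]
      exact integral_add (integrable_eval_mul_conj_eval ν _ _)
        (integrable_eval_mul_conj_eval ν _ _))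
    (fun c P Q => by
      simp only [eval_smul, smul_eq_mul, map_mul, mul_left_comm _ (conj c), integral_const_mul])

variable {ν}

lemma circleForm_apply (P Q : ℂ[X]) :
    circleForm ν P Q = ∫ θ, P.eval (expI θ) * conj (Q.eval (expI θ)) ∂ν := rfl

lemma circleForm_X_pow (P : ℂ[X]) (m : ℕ) :
    circleForm ν P (X ^ m) = ∫ θ, P.eval (expI θ) * expI (-(m * θ)) ∂ν := by
  simp [circleForm_apply, expI_neg_mul]

lemma conj_circleForm (P Q : ℂ[X]) : conj (circleForm ν P Q) = circleForm ν Q P := by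
  simp only [circleForm_apply, ← integral_conj, map_mul, Complex.conj_conj, mul_comm]

lemma circleForm_self (P : ℂ[X]) :
    circleForm ν P P = ((∫ θ, ‖P.eval (expI θ)‖ ^ 2 ∂ν : ℝ) : ℂ) := by
  simp only [circleForm_apply, Complex.mul_conj, Complex.normSq_eq_norm_sq]
  exact_mod_cast integral_ofReal (𝕜 := ℂ)

lemma circleForm_X_mul_X_mul (P Q : ℂ[X]) : circleForm ν (X * P) (X * Q) = circleForm ν P Q := by
  refine integral_congr_ae (ae_of_all _ fun θ => ?_)
  have h : expI θ * conj (expI θ) = 1 := by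
    rw [Complex.mul_conj, Complex.normSq_eq_norm_sq, norm_expI]; simp
  simp only [eval_mul, eval_X, map_mul]
  linear_combination (P.eval (expI θ) * conj (Q.eval (expI θ))) * h

lemma circleForm_eq_conj_coeff_mul {P : ℂ[X]} {N : ℕ}
    (horth : ∀ m < N, circleForm ν P (X ^ m) = 0) {Q : ℂ[X]} (hQ : Q.natDegree ≤ N) :
    circleForm ν P Q = conj (Q.coeff N) * circleForm ν P (X ^ N) := by
  conv_lhs => rw [Q.as_sum_range' (N + 1) (by omega)]
  simp only [map_sum, ← C_mul_X_pow_eq_monomial, ← smul_eq_C_mul, map_smulₛₗ, smul_eq_mul]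
  refine Finset.sum_eq_single_of_mem N (Finset.self_mem_range_succ N) fun j hj hjN => ?_
  rw [horth j (by simp at hj; omega), mul_zero]

lemma norm_lt_one_of_eval_eq_zero {P : ℂ[X]} {N : ℕ} (hP : P.natDegree ≤ N)
    (horth : ∀ m < N, circleForm ν P (X ^ m) = 0) (hPP : circleForm ν P P ≠ 0)
    {z : ℂ} (hz : P.eval z = 0) : ‖z‖ < 1 := by
  set q := P /ₘ (X - C z)
  have hfac : (X - C z) * q = P := mul_divByMonic_eq_iff_isRoot.mpr hz
  have hq0 : q ≠ 0 := by
    rintro h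
    rw [h, mul_zero] at hfac
    simp [← hfac] at hPP
  have hqdeg : q.natDegree < N := by
    have := congrArg natDegree hfac
    rw [natDegree_mul (X_sub_C_ne_zero z) hq0, natDegree_X_sub_C] at this
    omega
  have hPq : circleForm ν P q = 0 := by
    rw [circleForm_eq_conj_coeff_mul horth hqdeg.le, coeff_eq_zero_of_natDegree_lt hqdeg,
      map_zero, zero_mul]
  have hqP : circleForm ν q P = 0 := by rw [← conj_circleForm, hPq, map_zero]
  -- on the circle `‖e q(e)‖ = ‖q(e)‖`, while `e q(e) = P(e) + z q(e)` with `P ⟂ q`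
  have hXq : X * q = P + z • q := by rw [smul_eq_C_mul]; linear_combination hfac
  have key : circleForm ν q q = circleForm ν P P + (z * conj z) * circleForm ν q q := by
    conv_lhs => rw [← circleForm_X_mul_X_mul, hXq]
    simp only [map_add, map_smul, map_smulₛₗ, LinearMap.add_apply, LinearMap.smul_apply,
      smul_eq_mul, hPq, hqP]
    ring
  rw [circleForm_self] at hPP
  rw [circleForm_self, circleForm_self, Complex.mul_conj, Complex.normSq_eq_norm_sq] at key
  have hqq : 0 ≤ ∫ θ, ‖q.eval (expI θ)‖ ^ 2 ∂ν := integral_nonneg fun θ => by positivity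
  have hPP' : 0 < ∫ θ, ‖P.eval (expI θ)‖ ^ 2 ∂ν :=
    (integral_nonneg fun θ => by positivity).lt_of_ne (by exact_mod_cast hPP.symm)
  have key' : ∫ θ, ‖q.eval (expI θ)‖ ^ 2 ∂ν
      = ∫ θ, ‖P.eval (expI θ)‖ ^ 2 ∂ν + ‖z‖ ^ 2 * ∫ θ, ‖q.eval (expI θ)‖ ^ 2 ∂ν := by
    exact_mod_cast key
  by_contra! h
  nlinarith [mul_nonneg (sub_nonneg.mpr (one_le_pow₀ (n := 2) h)) hqq]

lemma circleForm_eq_conj_coeff_div {P : ℂ[X]} {N : ℕ} (hP : P.natDegree ≤ N)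
    (horth : ∀ m < N, circleForm ν P (X ^ m) = 0) (hPP : circleForm ν P P = 1)
    {Q : ℂ[X]} (hQ : Q.natDegree ≤ N) :
    circleForm ν P Q = conj (Q.coeff N / P.coeff N) := by
  have h := circleForm_eq_conj_coeff_mul horth hP
  rw [hPP] at h
  rw [circleForm_eq_conj_coeff_mul horth hQ, map_div₀, div_eq_mul_inv,
    eq_inv_of_mul_eq_one_right h.symm]

end circleForm

lemma integral_Ico_expI_eq_two_pi_mul {g : ℂ → ℂ} (hg : DiffContOnCl ℂ g (Metric.ball 0 1)) :
    ∫ θ in Ico 0 (2 * π), g (expI θ) = 2 * π * g 0 := by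
  have h := (abs_one (α := ℝ) ▸ hg).circleAverage
  rw [Real.circleAverage_def, intervalIntegral.integral_of_le (by positivity),
    ← setIntegral_congr_set Ico_ae_eq_Ioc, inv_smul_eq_iff₀ (by positivity)] at h
  simpa [circleMap_zero, expI] using h

lemma eval_expI_ne_zero {P : ℂ[X]} {N : ℕ} (hP : P.natDegree ≤ N)
    (hP' : ∀ z ∈ Metric.closedBall (0 : ℂ) 1, (conjReflect N P).eval z ≠ 0) (θ : ℝ) :
    P.eval (expI θ) ≠ 0 := by
  have h := hP' (expI θ) (by simp [norm_expI])
  rw [conjReflect_eval_of_norm_eq_one hP (norm_expI θ)] at h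
  simpa using right_ne_zero_of_mul h

lemma integral_bsMeasure (P : ℂ[X]) (f : ℝ → ℂ) :
    ∫ θ, f θ ∂bsMeasure P
      = ∫ θ in Ico 0 (2 * π), (1 / (2 * π * ‖P.eval (expI θ)‖ ^ 2)) • f θ := by
  rw [bsMeasure, integral_withDensity_eq_integral_toReal_smul (by fun_prop)
    (ae_of_all _ fun _ => ENNReal.ofReal_lt_top)]
  refine integral_congr_ae (ae_of_all _ fun θ => ?_)
  dsimp only
  rw [ENNReal.toReal_ofReal (by positivity)]
  rfl

lemma isFiniteMeasure_bsMeasure {P : ℂ[X]} (hP : ∀ θ, P.eval (expI θ) ≠ 0) :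
    IsFiniteMeasure (bsMeasure P) := by
  have hcont : Continuous fun θ => 1 / (2 * π * ‖P.eval (expI θ)‖ ^ 2) := by
    refine continuous_const.div (by fun_prop) fun θ => ?_
    have := hP θ
    positivity
  exact isFiniteMeasure_withDensity_ofReal
    ((hcont.integrableOn_Icc.mono_set Ico_subset_Icc_self).hasFiniteIntegral)

lemma circleForm_bsMeasure {P : ℂ[X]} {N : ℕ} [IsFiniteMeasure (bsMeasure P)]
    (hP : P.natDegree ≤ N)
    (hP' : ∀ z ∈ Metric.closedBall (0 : ℂ) 1, (conjReflect N P).eval z ≠ 0)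
    {Q : ℂ[X]} (hQ : Q.natDegree ≤ N) :
    circleForm (bsMeasure P) P Q = conj (Q.coeff N / P.coeff N) := by
  set g : ℂ → ℂ := fun z => (conjReflect N Q).eval z / (conjReflect N P).eval z
  have hg : DiffContOnCl ℂ g (Metric.ball 0 1) := by
    refine DifferentiableOn.diffContOnCl ?_
    rw [closure_ball _ one_ne_zero]
    exact (Polynomial.differentiable _).differentiableOn.div
      (Polynomial.differentiable _).differentiableOn hP'
  -- multiplying numerator and denominator by `e^{iNθ}` turns the density into `Q^*/P^*`
  have hpt : ∀ θ, (1 / (2 * π * ‖P.eval (expI θ)‖ ^ 2)) • (P.eval (expI θ) * conj (Q.eval (expI θ)))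
      = (2 * π : ℂ)⁻¹ * g (expI θ) := by
    intro θ
    have ha := eval_expI_ne_zero hP hP' θ
    have he : expI θ ≠ 0 := Complex.exp_ne_zero _
    simp only [g, conjReflect_eval_of_norm_eq_one hP (norm_expI θ),
      conjReflect_eval_of_norm_eq_one hQ (norm_expI θ), Complex.real_smul]
    have hn : ((‖P.eval (expI θ)‖ : ℝ) : ℂ) ^ 2 = P.eval (expI θ) * conj (P.eval (expI θ)) := by
      rw [Complex.mul_conj, Complex.normSq_eq_norm_sq]; push_cast; ring
    push_cast
    rw [hn]
    field_simp
  rw [circleForm_apply, integral_bsMeasure, integral_congr_ae (ae_of_all _ hpt), integral_const_mul,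
    integral_Ico_expI_eq_two_pi_mul hg]
  simp only [g, conjReflect_eval_zero, map_div₀]
  field_simp

lemma integral_expI_neg_mul_eq_conj_circleForm_add {ν : Measure ℝ} [IsFiniteMeasure ν]
    {φ A C : ℂ[X]} {N k : ℕ}
    (hφ : φ.natDegree ≤ N) (hC : C.natDegree ≤ N) (hk : k ≤ N)
    (h : A * conjReflect N φ + C * φ = X ^ (N - k)) :
    ∫ θ, expI (-(k * θ)) ∂ν = conj (circleForm ν φ A) + circleForm ν φ (conjReflect N C) := by
  rw [conj_circleForm, circleForm_apply, circleForm_apply,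
    ← integral_add (integrable_eval_mul_conj_eval ν _ _) (integrable_eval_mul_conj_eval ν _ _)]
  refine integral_congr_ae (ae_of_all _ fun θ => ?_)
  obtain ⟨n, rfl⟩ := Nat.exists_eq_add_of_le' hk
  have he := norm_expI θ
  have hpow : ∀ m : ℕ, (expI θ * conj (expI θ)) ^ m = 1 := fun m => by
    rw [Complex.mul_conj, Complex.normSq_eq_norm_sq, he]; simp
  have h' := congrArg (eval (expI θ)) h
  simp only [eval_add, eval_mul, eval_pow, eval_X, conjReflect_eval_of_norm_eq_one hφ he,
    Nat.add_sub_cancel] at h'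
  simp only [expI_neg_mul, conjReflect_eval_of_norm_eq_one hC he, map_mul, map_pow,
    Complex.conj_conj]
  -- multiply the Bézout identity at `e = e^{iθ}` by `\bar e^N`, using `e \bar e = 1`
  linear_combination (-conj (expI θ) ^ (n + k)) * h' - conj (expI θ) ^ k * hpow n
    + A.eval (expI θ) * conj (φ.eval (expI θ)) * hpow (n + k)

lemma integral_expI_neg_mul_congr_of_circleForm_eq {ν₁ ν₂ : Measure ℝ} [IsFiniteMeasure ν₁]
    [IsFiniteMeasure ν₂] {φ : ℂ[X]} {N : ℕ} (hφ : φ.natDegree = N)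
    (hcop : IsCoprime (conjReflect N φ) φ)
    (h : ∀ Q : ℂ[X], Q.natDegree ≤ N → circleForm ν₁ φ Q = circleForm ν₂ φ Q)
    {k : ℕ} (hk : k ≤ N) :
    ∫ θ, expI (-(k * θ)) ∂ν₁ = ∫ θ, expI (-(k * θ)) ∂ν₂ := by
  have hφ0 : φ ≠ 0 := by
    rintro rfl
    simp only [conjReflect, reflect_zero, Polynomial.map_zero, isCoprime_zero_left] at hcop
    exact not_isUnit_zero hcop
  obtain ⟨A, C, hA, hC, hAC⟩ := exists_mul_add_mul_eq_of_isCoprime hcop hφ0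
    (by rw [hφ]; exact natDegree_conjReflect_le hφ.le) (r := X ^ (N - k)) (by simp [hφ])
  rw [hφ] at hA hC
  rw [integral_expI_neg_mul_eq_conj_circleForm_add hφ.le hC hk hAC,
    integral_expI_neg_mul_eq_conj_circleForm_add hφ.le hC hk hAC, h A hA,
    h _ (natDegree_conjReflect_le hC)]

lemma integral_expI_neg_int_mul_eq_of_forall_nat {ν₁ ν₂ : Measure ℝ} {N : ℕ}
    (h : ∀ k : ℕ, k ≤ N → ∫ θ, expI (-(k * θ)) ∂ν₁ = ∫ θ, expI (-(k * θ)) ∂ν₂)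
    {k : ℤ} (hk : |k| ≤ N) :
    ∫ θ, expI (-(k * θ)) ∂ν₁ = ∫ θ, expI (-(k * θ)) ∂ν₂ := by
  obtain ⟨m, rfl | rfl⟩ := Int.eq_nat_or_neg k
  · exact_mod_cast h m (by simpa using hk)
  · have hconj : ∀ ν : Measure ℝ,
        ∫ θ, expI (-(((-m : ℤ) : ℝ) * θ)) ∂ν = conj (∫ θ, expI (-(m * θ)) ∂ν) := fun ν => by
      simp only [← integral_conj, conj_expI]
      push_cast
      ring_nf
    rw [hconj, hconj, h m (by simpa using hk)]

lemma isProbabilityMeasure_of_integral_one {α : Type*} [MeasurableSpace α] {ν : Measure α}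
    [IsFiniteMeasure ν] (h : ∫ _, (1 : ℂ) ∂ν = 1) : IsProbabilityMeasure ν := by
  rw [integral_const, Complex.real_smul, mul_one] at h
  exact ⟨(ENNReal.toReal_eq_one_iff _).mp (by exact_mod_cast h)⟩

end BernsteinSzego

namespace IsOrthonormalPolynomial

open BernsteinSzego

variable {μ : Measure ℝ} {N : ℕ} {φ : ℂ[X]}

lemma natDegree_eq (hφ : IsOrthonormalPolynomial μ N φ) : φ.natDegree = N :=
  natDegree_eq_of_degree_eq_some hφ.1

lemma coeff_ne_zero (hφ : IsOrthonormalPolynomial μ N φ) : φ.coeff N ≠ 0 := by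
  rw [← hφ.natDegree_eq, coeff_natDegree]
  intro h
  simpa [h] using hφ.2.2.1

variable [IsFiniteMeasure μ]

lemma circleForm_X_pow (hφ : IsOrthonormalPolynomial μ N φ) {m : ℕ} (hm : m < N) :
    circleForm μ φ (X ^ m) = 0 := by
  simpa only [BernsteinSzego.circleForm_X_pow, expI, Complex.ofReal_neg] using hφ.2.2.2.1 m hm

lemma circleForm_self (hφ : IsOrthonormalPolynomial μ N φ) : circleForm μ φ φ = 1 := by
  rw [BernsteinSzego.circleForm_self]
  exact_mod_cast hφ.2.2.2.2

lemma norm_lt_one_of_eval_eq_zero (hφ : IsOrthonormalPolynomial μ N φ) {z : ℂ}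
    (hz : φ.eval z = 0) : ‖z‖ < 1 :=
  BernsteinSzego.norm_lt_one_of_eval_eq_zero hφ.natDegree_eq.le (fun _ => hφ.circleForm_X_pow)
    (by simp [hφ.circleForm_self]) hz

end IsOrthonormalPolynomial

open BernsteinSzego

theorem bernstein_szego_moments_general
    (μ : Measure ℝ) [IsProbabilityMeasure μ]
    (N : ℕ) (φ : Polynomial ℂ)
    (hφ : IsOrthonormalPolynomial μ N φ) :
    (∀ θ : ℝ, φ.eval (Complex.exp (θ * Complex.I)) ≠ 0) ∧
    IsProbabilityMeasure (bsMeasure φ) ∧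
    ∀ k : ℤ, |k| ≤ (N : ℤ) →
      ∫ θ : ℝ, Complex.exp (-((k : ℝ) * θ : ℝ) * Complex.I) ∂(bsMeasure φ)
        = ∫ θ : ℝ, Complex.exp (-((k : ℝ) * θ : ℝ) * Complex.I) ∂μ := by
  have hdeg := hφ.natDegree_eq.le
  have hstar : ∀ z ∈ Metric.closedBall (0 : ℂ) 1, (conjReflect N φ).eval z ≠ 0 := fun z hz =>
    conjReflect_eval_ne_zero hdeg hφ.coeff_ne_zero (fun _ => hφ.norm_lt_one_of_eval_eq_zero)
      (mem_closedBall_zero_iff.mp hz)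
  have hne := eval_expI_ne_zero hdeg hstar
  have := isFiniteMeasure_bsMeasure hne
  have hmom : ∀ k : ℕ, k ≤ N →
      ∫ θ, expI (-(k * θ)) ∂bsMeasure φ = ∫ θ, expI (-(k * θ)) ∂μ := fun k =>
    integral_expI_neg_mul_congr_of_circleForm_eq hφ.natDegree_eq
      (isCoprime_conjReflect hdeg hφ.coeff_ne_zero fun _ => hφ.norm_lt_one_of_eval_eq_zero)
      fun Q hQ => by
        rw [circleForm_bsMeasure hdeg hstar hQ,
          circleForm_eq_conj_coeff_div hdeg (fun _ => hφ.circleForm_X_pow) hφ.circleForm_self hQ]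
  refine ⟨hne, isProbabilityMeasure_of_integral_one ?_, fun k hk => ?_⟩
  · simpa [expI_zero] using hmom 0 (Nat.zero_le N)
  · simpa only [expI, Complex.ofReal_neg] using integral_expI_neg_int_mul_eq_of_forall_nat hmom hk

/-- Bernstein–Szegő approximation: `μ_N = dθ/(2π|φ_N|²)` is a probability measure whose
trigonometric moments of order up to `N` coincide with those of `μ`. -/
theorem bernstein_szego_moments
    (μ : Measure ℝ) [IsProbabilityMeasure μ]
    (hsupp : μ (Set.Ico (0 : ℝ) (2 * π))ᶜ = 0)
    (hinf : HasInfiniteSupport μ)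
    (N : ℕ) (φ : Polynomial ℂ)
    (hφ : IsOrthonormalPolynomial μ N φ) :
    (∀ θ : ℝ, φ.eval (Complex.exp (θ * Complex.I)) ≠ 0) ∧
    IsProbabilityMeasure (bsMeasure φ) ∧
    ∀ k : ℤ, |k| ≤ (N : ℤ) →
      ∫ θ : ℝ, Complex.exp (-((k : ℝ) * θ : ℝ) * Complex.I) ∂(bsMeasure φ)
        = ∫ θ : ℝ, Complex.exp (-((k : ℝ) * θ : ℝ) * Complex.I) ∂μ :=
  bernstein_szego_moments_general μ N φ hφ
end
end

section
/- Let μ be a probability measure on [0,2π) with infinite support, let n ≥ 2, let φ_0, …, φ_{n−1} be its orthonormal polynomials (deg φ_j = j, positive leading coefficients), and let K_{n−1}(ξ, z) = Σ_{j=0}^{n−1} conj(φ_j(ξ)) φ_j(z). Fix ẑ with |ẑ| = 1. Then the polynomial z ↦ K_{n−1}(ẑ, z) = Σ_{j=0}^{n−1} conj(φ_j(ẑ)) φ_j(z) has degree exactly n−1 and has n−1 distinct roots ξ_1, …, ξ_{n−1}, all of modulus 1; moreover K_{n−1}(ξ_i, ξ_j) = 0 for all i ≠ j. -/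
open MeasureTheory Polynomial Real Set

noncomputable section

/-!
Restricting polynomials to the unit circle embeds them into `L²(μ)`; infinite support makes the
embedding injective, and multiplication by `X` is an isometry. For `deg p < n` the kernel
reproduces evaluation, `⟪K(ξ, ·), p⟫ = p(ξ)`, and for `|a| = |b| = 1` the two linear factors may
be exchanged: `⟪(X - a) p, (X - b) q⟫ = conj a · b · ⟪(X - b) p, (X - a) q⟫`.

* `K(ẑ, ·)` has exact degree `n - 1` since `φ_{n-1}(ẑ) ≠ 0`: a factor `X - ẑ` of `φ_{n-1}` would
  make `φ_{n-1}` orthogonal to itself.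
* If `K(ẑ, ·) = (X - ξ) g`, then `⟪(X - ξ) g, (X - ẑ) g⟫ = 0`, and expanding with the isometry
  forces `|ξ| = 1`.
* If `K(ẑ, ·) = (X - ξ)² u`, the exchange rule turns `⟪K(ẑ, ·), (X - ẑ)² u⟫ = 0` into
  `‖(X - ẑ)(X - ξ) u‖ = 0`.
* For distinct roots `ξ₁, ξ₂`, each `K(ξᵢ, ·)` vanishes at `ẑ`; writing `K(ξ₁, ·) = (X - ẑ) k₁`,
  the exchange rule shows `(X - ξ₁) k₁ ⊥ K(ξ₂, ·)`, so `(ξ₂ - ξ₁) k₁(ξ₂) = 0`, hence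
  `K(ξ₁, ξ₂) = (ξ₂ - ẑ) k₁(ξ₂) = 0`.
-/

open scoped InnerProductSpace ComplexConjugate

namespace OPUC

lemma degree_X_sub_C_mul_eq {R : Type*} [CommRing R] [IsDomain R] (a b : R) (p : R[X]) :
    ((X - C a) * p).degree = ((X - C b) * p).degree := by
  simp only [degree_mul, degree_X_sub_C]

lemma span_range_eq_degreeLT {K : Type*} [Field K] {n : ℕ} {φ : Fin n → K[X]}
    (hli : LinearIndependent K φ) (hdeg : ∀ j, (φ j).degree < n) :
    Submodule.span K (Set.range φ) = degreeLT K n := by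
  refine Submodule.eq_of_le_of_finrank_eq
    (Submodule.span_le.2 (Set.range_subset_iff.2 fun j => mem_degreeLT.2 (hdeg j))) ?_
  rw [finrank_span_eq_card hli, (degreeLTEquiv K n).finrank_eq, Module.finrank_fin_fun,
    Fintype.card_fin]

lemma exists_injective_fin_isRoot {K : Type*} [Field K] [IsAlgClosed K] {p : K[X]} {m : ℕ}
    (hm : p.natDegree = m) (hsimple : ∀ a, p.rootMultiplicity a ≤ 1) :
    ∃ ξ : Fin m → K, Function.Injective ξ ∧ ∀ i, p.IsRoot (ξ i) := by
  classical
  have hnodup : p.roots.Nodup :=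
    Multiset.nodup_iff_count_le_one.2 fun a => (count_roots p).trans_le (hsimple a)
  have hcard : p.roots.toFinset.card = m := by
    rw [Multiset.toFinset_card_of_nodup hnodup, IsAlgClosed.card_roots_eq_natDegree, hm]
  let e := p.roots.toFinset.equivFinOfCardEq hcard
  exact ⟨fun i => e.symm i, Subtype.val_injective.comp e.symm.injective,
    fun i => isRoot_of_mem_roots (Multiset.mem_toFinset.1 (e.symm i).2)⟩

section ShiftIsometry

variable {E : Type*} [NormedAddCommGroup E] [InnerProductSpace ℂ E] {T : ℂ[X] →ₗ[ℂ] E}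

lemma map_X_sub_C_mul (a : ℂ) (p : ℂ[X]) : T ((X - C a) * p) = T (X * p) - a • T p := by
  rw [sub_mul, map_sub, ← smul_eq_C_mul, map_smul]

lemma inner_eq_zero_of_degree_lt {ψ q : ℂ[X]} {k : ℕ} (hψ : ∀ m < k, ⟪T (X ^ m), T ψ⟫_ℂ = 0)
    (hq : q.degree < k) : ⟪T q, T ψ⟫_ℂ = 0 := by
  classical
  suffices degreeLT ℂ k ≤ (Submodule.span ℂ {T ψ})ᗮ.comap T from
    Submodule.mem_orthogonal_singleton_iff_inner_left.1 (this (mem_degreeLT.2 hq))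
  rw [degreeLT_eq_span_X_pow, Submodule.span_le, Finset.coe_image]
  rintro _ ⟨m, hm, rfl⟩
  exact Submodule.mem_orthogonal_singleton_iff_inner_left.2 (hψ m (Finset.mem_range.1 hm))

variable (hX : ∀ p q, ⟪T (X * p), T (X * q)⟫_ℂ = ⟪T p, T q⟫_ℂ)
include hX

lemma inner_X_sub_C_mul (a b : ℂ) (p q : ℂ[X]) :
    ⟪T ((X - C a) * p), T ((X - C b) * q)⟫_ℂ =
      (1 + conj a * b) * ⟪T p, T q⟫_ℂ - b * ⟪T (X * p), T q⟫_ℂ - conj a * ⟪T p, T (X * q)⟫_ℂ := by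
  simp only [map_X_sub_C_mul, inner_sub_left, inner_sub_right, inner_smul_left,
    inner_smul_right, hX]
  ring

lemma inner_X_sub_C_mul_swap {a b : ℂ} (ha : ‖a‖ = 1) (hb : ‖b‖ = 1) (p q : ℂ[X]) :
    ⟪T ((X - C a) * p), T ((X - C b) * q)⟫_ℂ =
      conj a * b * ⟪T ((X - C b) * p), T ((X - C a) * q)⟫_ℂ := by
  have ha' : conj a * a = 1 := by rw [mul_comm, Complex.mul_conj', ha]; norm_num
  have hb' : conj b * b = 1 := by rw [mul_comm, Complex.mul_conj', hb]; norm_num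
  rw [inner_X_sub_C_mul hX, inner_X_sub_C_mul hX]
  linear_combination (b * ⟪T (X * p), T q⟫_ℂ - conj b * b * ⟪T p, T q⟫_ℂ) * ha' +
    (conj a * ⟪T p, T (X * q)⟫_ℂ - ⟪T p, T q⟫_ℂ) * hb'

lemma map_X_sub_C_mul_eq_zero_of_inner_eq_zero {b : ℂ} (hb : ‖b‖ = 1) {g : ℂ[X]}
    (h : ⟪T g, T ((X - C b) * g)⟫_ℂ = 0) : T ((X - C b) * g) = 0 := by
  have hb' : conj b * b = 1 := by rw [mul_comm, Complex.mul_conj', hb]; norm_num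
  rw [map_X_sub_C_mul, inner_sub_right, inner_smul_right, sub_eq_zero] at h
  have hconj : ⟪T (X * g), T g⟫_ℂ = conj b * ⟪T g, T g⟫_ℂ := by
    rw [← inner_conj_symm, h, map_mul, inner_conj_symm]
  rw [← inner_self_eq_zero (𝕜 := ℂ), inner_X_sub_C_mul hX, h, hconj]
  linear_combination (-⟪T g, T g⟫_ℂ) * hb'

lemma norm_eq_one_of_inner_X_sub_C_mul_eq_zero (hinj : Function.Injective T) {a b : ℂ}
    (hb : ‖b‖ = 1) {g : ℂ[X]} (hg : g ≠ 0)
    (h : ⟪T ((X - C a) * g), T ((X - C b) * g)⟫_ℂ = 0) : ‖a‖ = 1 := by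
  have hb' : conj b * b = 1 := by rw [mul_comm, Complex.mul_conj', hb]; norm_num
  set G := ⟪T g, T g⟫_ℂ
  set A := ⟪T (X * g), T g⟫_ℂ
  have hA : ⟪T g, T (X * g)⟫_ℂ = conj A := (inner_conj_symm _ _).symm
  have hG : conj G = G := inner_conj_symm _ _
  set D := b * G - conj A
  have hD : D ≠ 0 := by
    intro hD
    have h0 : T ((X - C b) * g) = 0 := by
      refine map_X_sub_C_mul_eq_zero_of_inner_eq_zero hX hb ?_
      rw [map_X_sub_C_mul, inner_sub_right, inner_smul_right, hA]
      linear_combination -hD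
    exact mul_ne_zero (X_sub_C_ne_zero b) hg (hinj (h0.trans (map_zero T).symm))
  have hrel : conj a * D = -b * conj D := by
    rw [inner_X_sub_C_mul hX, hA] at h
    simp only [D, map_sub, map_mul, hG, Complex.conj_conj]
    linear_combination h + G * hb'
  have := congrArg norm hrel
  rw [norm_mul, norm_mul, norm_neg, hb, RCLike.norm_conj, RCLike.norm_conj, one_mul] at this
  exact (mul_eq_right₀ (norm_ne_zero_iff.2 hD)).1 this

lemma eval_ne_zero_of_forall_inner_eq_zero {b : ℂ} (hb : ‖b‖ = 1) {ψ : ℂ[X]} (hψ : T ψ ≠ 0)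
    (horth : ∀ q : ℂ[X], q.degree < ψ.degree → ⟪T q, T ψ⟫_ℂ = 0) : ψ.eval b ≠ 0 := by
  intro hroot
  obtain ⟨g, rfl⟩ := dvd_iff_isRoot.2 hroot
  have hg : g ≠ 0 := by rintro rfl; simp at hψ
  refine hψ (map_X_sub_C_mul_eq_zero_of_inner_eq_zero hX hb (horth g ?_))
  rw [degree_mul, degree_X_sub_C, degree_eq_natDegree hg]
  exact_mod_cast (by omega : g.natDegree < 1 + g.natDegree)

end ShiftIsometry

-- `K_{n-1}(ξ, ·)` in the paper's notation
def cdKernel (n : ℕ) (φ : ℕ → ℂ[X]) (ξ : ℂ) : ℂ[X] :=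
  ∑ j ∈ Finset.range n, C (conj ((φ j).eval ξ)) * φ j

section Kernel

variable {n : ℕ} {φ : ℕ → ℂ[X]}

lemma eval_cdKernel (ξ ζ : ℂ) :
    (cdKernel n φ ξ).eval ζ = ∑ j ∈ Finset.range n, conj ((φ j).eval ξ) * (φ j).eval ζ := by
  simp only [cdKernel, eval_finsetSum, eval_mul, eval_C]

lemma eval_cdKernel_eq_conj (ξ ζ : ℂ) :
    (cdKernel n φ ξ).eval ζ = conj ((cdKernel n φ ζ).eval ξ) := by
  simp only [eval_cdKernel, map_sum, map_mul, Complex.conj_conj, mul_comm]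

lemma degree_cdKernel_lt (hdeg : ∀ j < n, (φ j).degree < n) (ξ : ℂ) :
    (cdKernel n φ ξ).degree < n := by
  refine mem_degreeLT.1 (Submodule.sum_mem _ fun j hj => ?_)
  rw [← smul_eq_C_mul]
  exact Submodule.smul_mem _ _ (mem_degreeLT.2 (hdeg j (Finset.mem_range.1 hj)))

lemma degree_cdKernel (hdeg : ∀ j < n, (φ j).degree = j) (hn : n ≠ 0) {ξ : ℂ}
    (hξ : (φ (n - 1)).eval ξ ≠ 0) : (cdKernel n φ ξ).degree = ↑(n - 1) := by
  obtain ⟨m, rfl⟩ := Nat.exists_eq_add_one_of_ne_zero hn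
  rw [Nat.add_sub_cancel] at hξ ⊢
  have hlast : (C (conj ((φ m).eval ξ)) * φ m).degree = m := by
    rw [degree_C_mul (by simpa using hξ), hdeg m m.lt_add_one]
  have hrest : (cdKernel m φ ξ).degree < m :=
    degree_cdKernel_lt (fun j hj => (hdeg j (by omega)).trans_lt (by exact_mod_cast hj)) ξ
  rw [← hlast] at hrest
  rw [cdKernel, Finset.sum_range_succ, ← cdKernel, degree_add_eq_right_of_degree_lt hrest, hlast]

variable {E : Type*} [NormedAddCommGroup E] [InnerProductSpace ℂ E] {T : ℂ[X] →ₗ[ℂ] E}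
  (hφ : Orthonormal ℂ (fun j : Fin n => T (φ j))) (hdeg : ∀ j < n, (φ j).degree < n)
include hφ hdeg

lemma eq_sum_inner_smul {p : ℂ[X]} (hp : p.degree < n) :
    p = ∑ j : Fin n, ⟪T (φ j), T p⟫_ℂ • φ j := by
  obtain ⟨c, rfl⟩ := (Submodule.mem_span_range_iff_exists_fun ℂ).1 <|
    (span_range_eq_degreeLT (hφ.linearIndependent.of_comp T) fun j => hdeg j j.2).ge
      (mem_degreeLT.2 hp)
  simp only [map_sum, map_smul, hφ.inner_right_fintype]

lemma inner_cdKernel {p : ℂ[X]} (hp : p.degree < n) (ξ : ℂ) :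
    ⟪T (cdKernel n φ ξ), T p⟫_ℂ = p.eval ξ := by
  conv_rhs => rw [eq_sum_inner_smul hφ hdeg hp]
  simp only [cdKernel, ← smul_eq_C_mul, map_sum, map_smul, sum_inner, inner_smul_left,
    Complex.conj_conj, eval_finsetSum, eval_smul, smul_eq_mul]
  rw [Finset.sum_range fun j => (φ j).eval ξ * ⟪T (φ j), T p⟫_ℂ]
  exact Finset.sum_congr rfl fun j _ => mul_comm _ _

end Kernel

section Roots

variable {E : Type*} [NormedAddCommGroup E] [InnerProductSpace ℂ E] {T : ℂ[X] →ₗ[ℂ] E}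
  (hX : ∀ p q, ⟪T (X * p), T (X * q)⟫_ℂ = ⟪T p, T q⟫_ℂ) (hinj : Function.Injective T)
  {n : ℕ} {φ : ℕ → ℂ[X]} (hφ : Orthonormal ℂ (fun j : Fin n => T (φ j)))
  (hdeg : ∀ j < n, (φ j).degree < n) {z₀ : ℂ} (hz₀ : ‖z₀‖ = 1)

include hX hinj hφ hdeg hz₀

lemma norm_eq_one_of_isRoot_cdKernel (hK : cdKernel n φ z₀ ≠ 0) {ξ : ℂ}
    (hξ : (cdKernel n φ z₀).IsRoot ξ) : ‖ξ‖ = 1 := by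
  obtain ⟨g, hg⟩ := dvd_iff_isRoot.2 hξ
  refine norm_eq_one_of_inner_X_sub_C_mul_eq_zero hX hinj hz₀ (right_ne_zero_of_mul (hg ▸ hK)) ?_
  have hdeg' : ((X - C z₀) * g).degree < (n : WithBot ℕ) := by
    rw [degree_X_sub_C_mul_eq z₀ ξ, ← hg]; exact degree_cdKernel_lt hdeg z₀
  rw [← hg, inner_cdKernel hφ hdeg hdeg']
  simp

lemma rootMultiplicity_cdKernel_le_one (hK : cdKernel n φ z₀ ≠ 0) (ξ : ℂ) :
    (cdKernel n φ z₀).rootMultiplicity ξ ≤ 1 := by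
  by_contra! h
  obtain ⟨u, hu⟩ := (le_rootMultiplicity_iff hK).1 h
  rw [sq, mul_assoc] at hu
  have hξ : ‖ξ‖ = 1 := norm_eq_one_of_isRoot_cdKernel hX hinj hφ hdeg hz₀ hK (by simp [hu])
  have hu0 : u ≠ 0 := fun h => hK (by rw [hu, h, mul_zero, mul_zero])
  have hdeg' : ((X - C z₀) * ((X - C z₀) * u)).degree < (n : WithBot ℕ) := by
    rw [degree_X_sub_C_mul_eq z₀ ξ, mul_left_comm, degree_X_sub_C_mul_eq z₀ ξ, ← hu]
    exact degree_cdKernel_lt hdeg z₀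
  have h0 := inner_cdKernel hφ hdeg hdeg' z₀
  rw [hu, inner_X_sub_C_mul_swap hX hξ hz₀, mul_left_comm (X - C ξ)] at h0
  have hc : conj ξ * z₀ ≠ 0 := by
    rw [← norm_ne_zero_iff, norm_mul, RCLike.norm_conj, hξ, hz₀]; norm_num
  simp only [eval_mul, eval_sub, eval_X, eval_C, sub_self, zero_mul, mul_eq_zero, hc,
    inner_self_eq_zero, map_eq_zero_iff T hinj, X_sub_C_ne_zero, hu0, or_self] at h0

lemma eval_cdKernel_eq_zero_of_isRoot (hK : cdKernel n φ z₀ ≠ 0) {ξ₁ ξ₂ : ℂ}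
    (h₁ : (cdKernel n φ z₀).IsRoot ξ₁) (h₂ : (cdKernel n φ z₀).IsRoot ξ₂) (hne : ξ₁ ≠ ξ₂) :
    (cdKernel n φ ξ₁).eval ξ₂ = 0 := by
  have hroot : ∀ {ξ}, (cdKernel n φ z₀).IsRoot ξ → (cdKernel n φ ξ).IsRoot z₀ := fun h => by
    rw [IsRoot.def, eval_cdKernel_eq_conj, h.eq_zero, map_zero]
  obtain ⟨k₁, hk₁⟩ := dvd_iff_isRoot.2 (hroot h₁)
  obtain ⟨k₂, hk₂⟩ := dvd_iff_isRoot.2 (hroot h₂)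
  have hdeg₁ : ((X - C ξ₁) * k₁).degree < (n : WithBot ℕ) := by
    rw [degree_X_sub_C_mul_eq ξ₁ z₀, ← hk₁]; exact degree_cdKernel_lt hdeg ξ₁
  have hdeg₂ : ((X - C ξ₁) * k₂).degree < (n : WithBot ℕ) := by
    rw [degree_X_sub_C_mul_eq ξ₁ z₀, ← hk₂]; exact degree_cdKernel_lt hdeg ξ₂
  have horth : ⟪T ((X - C ξ₁) * k₁), T (cdKernel n φ ξ₂)⟫_ℂ = 0 := by
    rw [hk₂, inner_X_sub_C_mul_swap hX (norm_eq_one_of_isRoot_cdKernel hX hinj hφ hdeg hz₀ hK h₁)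
      hz₀, ← hk₁, inner_cdKernel hφ hdeg hdeg₂]
    simp
  have hval : ((X - C ξ₁) * k₁).eval ξ₂ = 0 := by
    rw [← inner_cdKernel hφ hdeg hdeg₁ ξ₂, ← inner_conj_symm, horth, map_zero]
  rw [eval_mul, mul_eq_zero, eval_sub, eval_X, eval_C, sub_eq_zero] at hval
  rw [hk₁, eval_mul, hval.resolve_left hne.symm, mul_zero]

end Roots

open scoped BoundedContinuousFunction

def expI : ℝ →ᵇ ℂ :=
  BoundedContinuousFunction.mkOfBound ⟨fun θ => Complex.exp (θ * Complex.I), by fun_prop⟩ 2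
    fun _ _ => (dist_le_norm_add_norm _ _).trans <| by
      simp [Complex.norm_exp_ofReal_mul_I]; norm_num

lemma aeval_expI_apply (p : ℂ[X]) (θ : ℝ) :
    aeval expI p θ = p.eval (Complex.exp (θ * Complex.I)) := by
  induction p using Polynomial.induction_on' with
  | add p q hp hq => simp [hp, hq]
  | monomial n a => simp [expI]

lemma injOn_exp_mul_I : InjOn (fun θ : ℝ => Complex.exp (θ * Complex.I)) (Ico 0 (2 * π)) :=
  fun _ hθ _ hθ' h => Circle.exp_injOn_Ico (by simp) hθ hθ' (Subtype.ext (by simpa using h))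

section CircleL2

variable (μ : Measure ℝ) [IsFiniteMeasure μ]

def circleL2 : ℂ[X] →ₗ[ℂ] Lp ℂ 2 μ :=
  (BoundedContinuousFunction.toLp 2 μ ℂ).toLinearMap ∘ₗ (aeval expI).toLinearMap

lemma inner_circleL2 (p q : ℂ[X]) :
    ⟪circleL2 μ p, circleL2 μ q⟫_ℂ =
      ∫ θ, q.eval (Complex.exp (θ * Complex.I)) *
        conj (p.eval (Complex.exp (θ * Complex.I))) ∂μ := by
  simp only [circleL2, LinearMap.comp_apply, AlgHom.toLinearMap_apply,
    ContinuousLinearMap.coe_coe, BoundedContinuousFunction.inner_toLp, aeval_expI_apply]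

lemma inner_circleL2_X_mul (p q : ℂ[X]) :
    ⟪circleL2 μ (X * p), circleL2 μ (X * q)⟫_ℂ = ⟪circleL2 μ p, circleL2 μ q⟫_ℂ := by
  simp only [inner_circleL2, eval_mul, eval_X, map_mul]
  congr 1 with θ
  have h : Complex.exp (θ * Complex.I) * conj (Complex.exp (θ * Complex.I)) = 1 := by
    rw [Complex.mul_conj', Complex.norm_exp_ofReal_mul_I]; norm_num
  linear_combination (q.eval (Complex.exp (θ * Complex.I)) *
    conj (p.eval (Complex.exp (θ * Complex.I)))) * h

variable {μ}

lemma circleL2_injective (hsupp : μ (Ico (0 : ℝ) (2 * π))ᶜ = 0) (hinf : HasInfiniteSupport μ) :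
    Function.Injective (circleL2 μ) := by
  refine (injective_iff_map_eq_zero _).2 fun p hp => ?_
  by_contra hp0
  have hae : ∀ᵐ θ : ℝ ∂μ, p.eval (Complex.exp (θ * Complex.I)) = 0 := by
    have h := BoundedContinuousFunction.coeFn_toLp 2 μ ℂ (aeval expI p)
    change circleL2 μ p =ᵐ[μ] _ at h
    rw [hp] at h
    filter_upwards [h, Lp.coeFn_zero ℂ 2 μ] with θ h₁ h₂
    rw [← aeval_expI_apply, ← h₁, h₂, Pi.zero_apply]
  -- on `[0, 2π)` the zeros of `θ ↦ p(e^{iθ})` are finitely many, so `μ` would be finitely supported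
  set Z := Ico 0 (2 * π) ∩ {θ : ℝ | p.eval (Complex.exp (θ * Complex.I)) = 0}
  have hZ : Z.Finite := by
    refine Set.Finite.of_finite_image ?_ (injOn_exp_mul_I.mono inter_subset_left)
    exact (p.finite_setOfPred_isRoot hp0).subset (by rintro _ ⟨θ, ⟨_, hθ⟩, rfl⟩; exact hθ)
  refine hinf hZ.toFinset (measure_mono_null ?_ (measure_union_null (ae_iff.1 hae) hsupp))
  intro θ hθ
  by_cases h : θ ∈ Ico 0 (2 * π)
  · exact Or.inl fun h' => hθ (by simpa [Z] using ⟨h, h'⟩)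
  · exact Or.inr h

lemma _root_.IsOrthonormalPolynomial.inner_circleL2_eq_zero {k : ℕ} {ψ : ℂ[X]}
    (hψ : IsOrthonormalPolynomial μ k ψ) {q : ℂ[X]} (hq : q.degree < k) :
    ⟪circleL2 μ q, circleL2 μ ψ⟫_ℂ = 0 := by
  refine inner_eq_zero_of_degree_lt (fun m hm => ?_) hq
  rw [inner_circleL2, ← hψ.2.2.2.1 m hm]
  congr 1 with θ
  rw [eval_pow, eval_X, map_pow, ← Complex.exp_conj, ← Complex.exp_nat_mul]
  congr 2
  simp [Complex.conj_ofReal]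
  ring

lemma _root_.IsOrthonormalPolynomial.inner_circleL2_self {k : ℕ} {ψ : ℂ[X]}
    (hψ : IsOrthonormalPolynomial μ k ψ) : ⟪circleL2 μ ψ, circleL2 μ ψ⟫_ℂ = 1 := by
  rw [inner_circleL2]
  simp_rw [Complex.mul_conj']
  exact_mod_cast (integral_ofReal (𝕜 := ℂ)).trans (congrArg _ hψ.2.2.2.2)

lemma orthonormal_circleL2 {n : ℕ} {φ : ℕ → ℂ[X]}
    (hφ : ∀ j < n, IsOrthonormalPolynomial μ j (φ j)) :
    Orthonormal ℂ (fun j : Fin n => circleL2 μ (φ j)) := by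
  refine orthonormal_iff_ite.2 fun i j => ?_
  split_ifs with hij
  · exact hij ▸ (hφ i i.2).inner_circleL2_self
  rcases lt_or_gt_of_ne (Fin.val_injective.ne hij) with h | h
  · exact (hφ j j.2).inner_circleL2_eq_zero (by rw [(hφ i i.2).1]; exact_mod_cast h)
  · exact inner_eq_zero_symm.1 <|
      (hφ i i.2).inner_circleL2_eq_zero (by rw [(hφ j j.2).1]; exact_mod_cast h)

end CircleL2

end OPUC

/-- The Christoffel–Darboux kernel `K_{n−1}(ẑ, ·)` has exactly `n−1` distinct roots,
all on the unit circle, and the kernel vanishes at every pair of distinct roots. -/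
theorem cd_kernel_roots
    (μ : Measure ℝ) [IsProbabilityMeasure μ]
    (hsupp : μ (Set.Ico (0 : ℝ) (2 * π))ᶜ = 0)
    (hinf : HasInfiniteSupport μ)
    (n : ℕ) (hn : 2 ≤ n)
    (φ : ℕ → Polynomial ℂ)
    (hφ : ∀ j < n, IsOrthonormalPolynomial μ j (φ j))
    (zhat : ℂ) (hzhat : ‖zhat‖ = 1) :
    (∑ j ∈ Finset.range n,
        Polynomial.C (starRingEnd ℂ ((φ j).eval zhat)) * φ j).degree
      = ((n - 1 : ℕ) : WithBot ℕ) ∧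
    ∃ ξ : Fin (n - 1) → ℂ,
      Function.Injective ξ ∧
      (∀ i, ‖ξ i‖ = 1) ∧
      (∀ i, (∑ j ∈ Finset.range n,
        Polynomial.C (starRingEnd ℂ ((φ j).eval zhat)) * φ j).eval (ξ i) = 0) ∧
      (∀ i j : Fin (n - 1), i ≠ j →
        (∑ l ∈ Finset.range n,
          starRingEnd ℂ ((φ l).eval (ξ i)) * (φ l).eval (ξ j)) = 0) := by
  have hX := OPUC.inner_circleL2_X_mul μ
  have hinj := OPUC.circleL2_injective hsupp hinf
  have hON := OPUC.orthonormal_circleL2 hφ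
  have hdeg : ∀ j < n, (φ j).degree < n := fun j hj => by rw [(hφ j hj).1]; exact_mod_cast hj
  have hlast := hφ (n - 1) (by omega)
  have heval : (φ (n - 1)).eval zhat ≠ 0 :=
    OPUC.eval_ne_zero_of_forall_inner_eq_zero hX hzhat
      (fun h => by simpa [h] using hlast.inner_circleL2_self)
      (fun q hq => hlast.inner_circleL2_eq_zero (hq.trans_eq hlast.1))
  have hdegK := OPUC.degree_cdKernel (fun j hj => (hφ j hj).1) (by omega) heval
  have hK := ne_zero_of_coe_le_degree hdegK.ge
  obtain ⟨ξ, hξ, hroot⟩ := OPUC.exists_injective_fin_isRoot (natDegree_eq_of_degree_eq_some hdegK)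
    (OPUC.rootMultiplicity_cdKernel_le_one hX hinj hON hdeg hzhat hK)
  refine ⟨hdegK, ξ, hξ, fun i => OPUC.norm_eq_one_of_isRoot_cdKernel hX hinj hON hdeg hzhat hK
    (hroot i), hroot, fun i j hij => ?_⟩
  rw [← OPUC.eval_cdKernel]
  exact OPUC.eval_cdKernel_eq_zero_of_isRoot hX hinj hON hdeg hzhat hK (hroot i) (hroot j)
    (hξ.ne hij)
end
end

section
/- Let n ≥ 2, 1 ≤ m < n, ε > 0, θ_j = 2πj/n and ξ_j = e^{iθ_j} for j = 0, …, m−1. Let η be the measure on [0,2π) given by dη = dθ/(2π) + (ε/m) Σ_{j=0}^{m−1} δ_{θ_j}, and let K_{n−1}(ξ, z) = Σ_{l=0}^{n−1} conj(ξ)^l z^l. Then the monic polynomial Q(z) = z^n − [ (ε/m) / (1 + εn/m) ] Σ_{j=0}^{m−1} K_{n−1}(ξ_j, z) satisfies ∫₀^{2π} Q(e^{iθ}) e^{−ilθ} dη(θ) = 0 for every integer 0 ≤ l < n; that is, Q is the monic orthogonal polynomial of degree n for η. -/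
open MeasureTheory Polynomial Real Set

noncomputable section

open ComplexConjugate Complex Finset

/-!
Pairing `Q(e^{iθ})` with `e^{-ilθ}` against `dθ/2π` picks out the coefficient of `z^l` in
`Q`, which for `l < n` is `-c Σ_j conj(ξ_j)^l`, where `c = (ε/m)/(1 + εn/m)`. The kernels at
distinct `n`-th roots of unity are orthogonal, `K_{n-1}(ξ_k, ξ_j) = n δ_{jk}`, so
`Q(ξ_j) = ξ_j^n - c n = 1 - c n` and the point masses contribute
`(ε/m)(1 - c n) Σ_j conj(ξ_j)^l`. The constant `c` is precisely the solution of
`(ε/m)(1 - c n) = c`, so the two contributions cancel.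
-/

def christoffelDarbouxKernel (n : ℕ) (ξ : ℂ) : ℂ[X] :=
  ∑ i ∈ range n, C (conj ξ ^ i) * X ^ i

lemma coeff_christoffelDarbouxKernel (n l : ℕ) (ξ : ℂ) :
    (christoffelDarbouxKernel n ξ).coeff l = if l < n then conj ξ ^ l else 0 := by
  simp only [christoffelDarbouxKernel, finsetSum_coeff, coeff_C_mul, coeff_X_pow, mul_ite, mul_one,
    mul_zero, Finset.sum_ite_eq, Finset.mem_range]

lemma eval_christoffelDarbouxKernel (n : ℕ) (ξ z : ℂ) :
    (christoffelDarbouxKernel n ξ).eval z = ∑ i ∈ range n, (conj ξ * z) ^ i := by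
  simp [christoffelDarbouxKernel, eval_finsetSum, mul_pow]

lemma geom_sum_of_pow_eq_one {K : Type*} [DivisionRing K] [DecidableEq K] {w : K} {n : ℕ}
    (hw : w ^ n = 1) :
    ∑ i ∈ range n, w ^ i = if w = 1 then (n : K) else 0 := by
  split_ifs with h
  · simp [h]
  · rw [geom_sum_eq h, hw, sub_self, zero_div]

lemma eval_christoffelDarbouxKernel_of_pow_eq_one {n : ℕ} {ξ z : ℂ} (hξ : ξ ^ n = 1)
    (hz : z ^ n = 1) :
    (christoffelDarbouxKernel n ξ).eval z = if z = ξ then (n : ℂ) else 0 := by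
  rcases eq_or_ne n 0 with rfl | hn
  · simp [christoffelDarbouxKernel]
  have hw : (conj ξ * z) ^ n = 1 := by rw [mul_pow, ← map_pow, hξ, hz, map_one, one_mul]
  have hξ0 : ξ ≠ 0 := by rintro rfl; simp [hn] at hξ
  have hw1 : conj ξ * z = 1 ↔ z = ξ := by
    rw [← Complex.inv_eq_conj (norm_eq_one_of_pow_eq_one hξ hn), inv_mul_eq_one₀ hξ0, eq_comm]
  rw [eval_christoffelDarbouxKernel, geom_sum_of_pow_eq_one hw]
  exact if_congr hw1 rfl rfl

lemma eval_sum_christoffelDarbouxKernel_pow {ζ : ℂ} {n m j : ℕ} (hζ : IsPrimitiveRoot ζ n)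
    (hmn : m ≤ n) (hj : j < m) :
    (∑ k ∈ range m, christoffelDarbouxKernel n (ζ ^ k)).eval (ζ ^ j) = n := by
  have hpow : ∀ k, (ζ ^ k) ^ n = 1 := fun k => by rw [pow_right_comm, hζ.pow_eq_one, one_pow]
  simp only [eval_finsetSum, eval_christoffelDarbouxKernel_of_pow_eq_one (hpow _) (hpow j)]
  rw [Finset.sum_eq_single_of_mem j (mem_range.2 hj) fun k hk hkj => if_neg fun h =>
    hkj (hζ.pow_inj (by omega) (by simp at hk; omega) h).symm, if_pos rfl]

lemma setIntegral_Ico_exp_int_mul_I (k : ℤ) :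
    ∫ θ in Ico 0 (2 * π), exp (k * θ * I) = if k = 0 then 2 * π else 0 := by
  rw [integral_Ico_eq_integral_Ioo, ← integral_Ioc_eq_integral_Ioo,
    ← intervalIntegral.integral_of_le two_pi_pos.le]
  split_ifs with hk
  · simp [hk]
  · have hc : (k : ℂ) * I ≠ 0 := mul_ne_zero (Int.cast_ne_zero.2 hk) I_ne_zero
    simp_rw [mul_right_comm _ _ I]
    rw [integral_exp_mul_complex hc]
    have : exp (k * I * (2 * π)) = 1 := by
      rw [← exp_int_mul_two_pi_mul_I k]
      ring_nf
    simp [this]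

lemma exp_neg_mul_I_eq_conj_pow (l : ℕ) (θ : ℝ) :
    exp (-((l : ℝ) * θ : ℝ) * I) = conj (exp (θ * I)) ^ l := by
  rw [← exp_conj, ← Complex.exp_nat_mul]
  congr 1
  simp only [map_mul, conj_ofReal, conj_I]
  push_cast
  ring

lemma setIntegral_Ico_eval_exp_mul_exp_neg (P : ℂ[X]) (l : ℕ) :
    ∫ θ in Ico 0 (2 * π), P.eval (exp (θ * I)) * exp (-((l : ℝ) * θ : ℝ) * I)
      = 2 * π * P.coeff l := by
  have hN : P.natDegree < max P.natDegree l + 1 := by omega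
  have hl : l ∈ range (max P.natDegree l + 1) := mem_range.2 (by omega)
  have hmonomial : ∀ (i : ℕ) (θ : ℝ), exp (θ * I) ^ i * exp (-((l : ℝ) * θ : ℝ) * I)
      = exp (((i - l : ℤ) : ℂ) * θ * I) := fun i θ => by
    rw [← Complex.exp_nat_mul, ← Complex.exp_add]
    push_cast
    ring_nf
  simp_rw [eval_eq_sum_range' hN, Finset.sum_mul, mul_assoc, hmonomial]
  rw [integral_finsetSum _ fun i _ => (by fun_prop : Continuous _).integrableOn_Icc.mono_set
    Ico_subset_Icc_self]
  simp_rw [integral_const_mul, setIntegral_Ico_exp_int_mul_I, sub_eq_zero, Nat.cast_inj]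
  rw [Finset.sum_eq_single_of_mem l hl fun i _ hil => by simp [hil]]
  simp only [if_true]
  push_cast
  ring

lemma integral_smul_restrict_add_sum_smul_dirac {E ι : Type*} [NormedAddCommGroup E]
    [NormedSpace ℝ E] [CompleteSpace E] {f : ℝ → E} (hf : Continuous f) {c : ℝ}
    (hc : 0 ≤ c) (a b : ℝ) (s : Finset ι) {w : ι → ℝ} (hw : ∀ i ∈ s, 0 ≤ w i)
    (t : ι → ℝ) :
    ∫ x, f x ∂(ENNReal.ofReal c • volume.restrict (Ico a b)
        + ∑ i ∈ s, ENNReal.ofReal (w i) • Measure.dirac (t i))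
      = c • (∫ x in Ico a b, f x) + ∑ i ∈ s, w i • f (t i) := by
  have hdirac_int : ∀ i, Integrable f (ENNReal.ofReal (w i) • Measure.dirac (t i)) := fun i =>
    (integrable_dirac enorm_lt_top).smul_measure ENNReal.ofReal_ne_top
  rw [integral_add_measure
      ((hf.integrableOn_Icc.mono_set Ico_subset_Icc_self).smul_measure ENNReal.ofReal_ne_top)
      (integrable_finsetSum_measure.2 fun i _ => hdirac_int i),
    integral_smul_measure, integral_finsetSum_measure fun i _ => hdirac_int i,
    ENNReal.toReal_ofReal hc]
  congr 1
  refine Finset.sum_congr rfl fun i hi => ?_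
  rw [integral_smul_measure, integral_dirac, ENNReal.toReal_ofReal (hw i hi)]

theorem rakhmanov_explicit_construction_general
    (n m : ℕ) (hm : 1 ≤ m) (hmn : m < n)
    (ε : ℝ) (hε : 0 < ε)
    (η : Measure ℝ)
    (hη : η = (ENNReal.ofReal (1 / (2 * π))) • volume.restrict (Set.Ico (0 : ℝ) (2 * π))
      + ∑ j ∈ Finset.range m, ENNReal.ofReal (ε / m) • Measure.dirac (2 * π * j / n))
    (Q : Polynomial ℂ)
    (hQ : Q = Polynomial.X ^ n -
      Polynomial.C ((((ε / m) / (1 + ε * n / m) : ℝ)) : ℂ) *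
        ∑ j ∈ Finset.range m, ∑ i ∈ Finset.range n,
          Polynomial.C ((starRingEnd ℂ
            (Complex.exp (2 * π * (j : ℝ) / n * Complex.I))) ^ i) * Polynomial.X ^ i) :
    ∀ l < n, ∫ θ : ℝ, Q.eval (Complex.exp (θ * Complex.I)) *
      Complex.exp (-((l : ℝ) * θ : ℝ) * Complex.I) ∂η = 0 := by
  intro l hl
  set c : ℝ := (ε / m) / (1 + ε * n / m)
  set ζ : ℂ := exp (2 * π * I / n)
  have hζ : IsPrimitiveRoot ζ n := isPrimitiveRoot_exp n (by omega)
  have hnode : ∀ j : ℕ, exp ((2 * π * j / n : ℝ) * I) = ζ ^ j := fun j => by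
    rw [← Complex.exp_nat_mul]
    push_cast
    ring_nf
  have hQ_kernel :
      Q = X ^ n - C (c : ℂ) * ∑ j ∈ range m, christoffelDarbouxKernel n (ζ ^ j) := by
    simp only [hQ, christoffelDarbouxKernel, ← hnode]
    push_cast
    rfl
  have hcoeff : Q.coeff l = -(c * ∑ j ∈ range m, conj (ζ ^ j) ^ l) := by
    simp [hQ_kernel, coeff_X_pow, finsetSum_coeff, coeff_christoffelDarbouxKernel, hl, hl.ne]
  have heval : ∀ j ∈ range m, Q.eval (ζ ^ j) = 1 - c * n := fun j hj => by
    rw [hQ_kernel, eval_sub, eval_mul, eval_C, eval_pow, eval_X, pow_right_comm, hζ.pow_eq_one,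
      one_pow, eval_sum_christoffelDarbouxKernel_pow hζ hmn.le (mem_range.1 hj)]
  have hweight : ε / m * (1 - c * n) = c := by
    have hm0 : (m : ℝ) ≠ 0 := by positivity
    simp only [c]
    field_simp
    ring
  rw [hη, integral_smul_restrict_add_sum_smul_dirac (by fun_prop) (by positivity) _ _ _
    (fun _ _ => by positivity), setIntegral_Ico_eval_exp_mul_exp_neg, hcoeff]
  simp_rw [exp_neg_mul_I_eq_conj_pow, hnode]
  have hdirac : ∑ j ∈ range m, (ε / m) • (Q.eval (ζ ^ j) * conj (ζ ^ j) ^ l)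
      = c * ∑ j ∈ range m, conj (ζ ^ j) ^ l := by
    rw [Finset.mul_sum]
    refine Finset.sum_congr rfl fun j hj => ?_
    rw [heval j hj, real_smul, ← mul_assoc]
    congr 1
    exact_mod_cast hweight
  rw [hdirac, real_smul]
  push_cast
  field_simp
  ring

/-- Rakhmanov's explicit construction: adding equal masses `ε/m` at the points
`θ_j = 2πj/n`, `j = 0,…,m−1`, to the normalized Lebesgue measure, the monic orthogonal
polynomial of degree `n` of the new measure is
`Q(z) = z^n − ((ε/m)/(1+εn/m)) Σ_j K_{n−1}(ξ_j, z)`. -/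
theorem rakhmanov_explicit_construction
    (n m : ℕ) (hn : 2 ≤ n) (hm : 1 ≤ m) (hmn : m < n)
    (ε : ℝ) (hε : 0 < ε)
    (η : Measure ℝ)
    (hη : η = (ENNReal.ofReal (1 / (2 * π))) • volume.restrict (Set.Ico (0 : ℝ) (2 * π))
      + ∑ j ∈ Finset.range m, ENNReal.ofReal (ε / m) • Measure.dirac (2 * π * j / n))
    (Q : Polynomial ℂ)
    (hQ : Q = Polynomial.X ^ n -
      Polynomial.C ((((ε / m) / (1 + ε * n / m) : ℝ)) : ℂ) *
        ∑ j ∈ Finset.range m, ∑ i ∈ Finset.range n,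
          Polynomial.C ((starRingEnd ℂ
            (Complex.exp (2 * π * (j : ℝ) / n * Complex.I))) ^ i) * Polynomial.X ^ i) :
    ∀ l < n, ∫ θ : ℝ, Q.eval (Complex.exp (θ * Complex.I)) *
      Complex.exp (-((l : ℝ) * θ : ℝ) * Complex.I) ∂η = 0 :=
  rakhmanov_explicit_construction_general n m hm hmn ε hε η hη Q hQ
end
end

section
/- Let n ≥ 2 be even, m = n/2, ε > 0, c = (ε/m)/(1+2ε), and ξ_j = e^{2πij/n} for j = 0, …, m−1. Define Q(z) = z^n − c Σ_{j=0}^{m−1} Σ_{l=0}^{n−1} ξ_j^{−l} z^l, and let Q* be the reversed polynomial of Q with respect to degree n. Then Q*(z) − Q(z) = ((1+3ε)/(1+2ε)) (1 − z^n) as polynomials; in particular sup_{|z|=1} |Q*(z) − Q(z)| ≤ 2(1+3ε)/(1+2ε). -/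
open MeasureTheory Polynomial Real Set

noncomputable section

def revPoly (n : ℕ) (Q : Polynomial ℂ) : Polynomial ℂ :=
  ∑ j ∈ Finset.range (n + 1), Polynomial.C (starRingEnd ℂ (Q.coeff j)) * Polynomial.X ^ (n - j)

/-- Formula (3.4): for Rakhmanov's polynomial with masses at half of the `n`-th roots of
unity, `Q* − Q = ((1+3ε)/(1+2ε))(1 − z^n)`, so `|Q* − Q| ≤ 2(1+3ε)/(1+2ε)` on the circle. -/
theorem rakhmanov_reversed_difference
    (n m : ℕ) (hn : 2 ≤ n) (heven : Even n) (hm : m = n / 2)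
    (ε : ℝ) (hε : 0 < ε)
    (Q : Polynomial ℂ)
    (hQ : Q = Polynomial.X ^ n -
      Polynomial.C ((((ε / m) / (1 + 2 * ε) : ℝ)) : ℂ) *
        ∑ j ∈ Finset.range m, ∑ i ∈ Finset.range n,
          Polynomial.C ((Complex.exp (2 * π * (j : ℝ) / n * Complex.I))⁻¹ ^ i) *
            Polynomial.X ^ i) :
    revPoly n Q - Q =
      Polynomial.C ((((1 + 3 * ε) / (1 + 2 * ε) : ℝ)) : ℂ) * (1 - Polynomial.X ^ n) ∧
    ∀ z : ℂ, ‖z‖ = 1 →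
      ‖(revPoly n Q - Q).eval z‖ ≤ 2 * (1 + 3 * ε) / (1 + 2 * ε) := by
  have hn0 : n ≠ 0 := by omega
  have hm0 : m ≠ 0 := by omega
  have hden : (1 : ℝ) + 2 * ε ≠ 0 := by positivity
  set ξ : ℕ → ℂ := fun j => Complex.exp (2 * π * (j : ℝ) / n * Complex.I) with hξ
  set d : ℕ → ℂ := fun l => ∑ j ∈ Finset.range m, (ξ j)⁻¹ ^ l with hd
  set c : ℂ := ((((ε / m) / (1 + 2 * ε) : ℝ)) : ℂ) with hc
  -- coefficients of Q
  have hcoeff : ∀ k, Q.coeff k = (if k = n then 1 else 0) - c * (if k < n then d k else 0) := by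
    intro k
    rw [hQ]
    simp only [Polynomial.coeff_sub, Polynomial.coeff_X_pow, Polynomial.coeff_C_mul,
      Polynomial.finset_sum_coeff, mul_ite, mul_one, mul_zero, Finset.sum_ite_eq,
      Finset.mem_range, hd]
    split_ifs <;> simp [hξ, inv_pow]
  -- coefficients of revPoly
  have hrev : ∀ k, (revPoly n Q).coeff k =
      if k ≤ n then starRingEnd ℂ (Q.coeff (n - k)) else 0 := by
    intro k
    unfold revPoly
    simp only [Polynomial.finset_sum_coeff, Polynomial.coeff_C_mul, Polynomial.coeff_X_pow,
      mul_ite, mul_one, mul_zero]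
    by_cases hk : k ≤ n
    · rw [if_pos hk, Finset.sum_eq_single (n - k)]
      · rw [if_pos (by omega)]
      · intro j hj hne
        rw [if_neg (by simp only [Finset.mem_range] at hj; omega)]
      · intro h
        exact absurd (Finset.mem_range.mpr (by omega)) h
    · rw [if_neg hk]
      exact Finset.sum_eq_zero fun j hj => by
        rw [if_neg (by simp only [Finset.mem_range] at hj; omega)]
  -- ξ basics
  have hξconj : ∀ j, starRingEnd ℂ (ξ j) = (ξ j)⁻¹ := by
    intro j
    rw [hξ]
    simp only
    rw [← Complex.exp_conj, ← Complex.exp_neg]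
    congr 1
    simp [map_div₀, Complex.conj_I, map_ofNat]
  have hξn : ∀ j, ξ j ^ n = 1 := by
    intro j
    rw [hξ]
    simp only
    rw [← Complex.exp_nat_mul]
    have : (n : ℂ) * (2 * ↑π * ↑(j:ℝ) / ↑n * Complex.I) = (j : ℤ) * (2 * ↑π * Complex.I) := by
      have hnC : (n : ℂ) ≠ 0 := Nat.cast_ne_zero.mpr hn0
      push_cast
      field_simp
    rw [this, Complex.exp_int_mul_two_pi_mul_I]
  have hξne : ∀ j, ξ j ≠ 0 := fun j => by rw [hξ]; exact Complex.exp_ne_zero _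
  -- symmetry of d
  have hsym : ∀ k, k ≤ n → starRingEnd ℂ (d (n - k)) = d k := by
    intro k hk
    rw [hd]
    simp only [map_sum, map_pow, map_inv₀, hξconj, inv_inv]
    refine Finset.sum_congr rfl fun j _ => ?_
    have : ξ j ^ (n - k) * ξ j ^ k = 1 := by
      rw [← pow_add, Nat.sub_add_cancel hk, hξn]
    rw [inv_pow]
    exact eq_inv_of_mul_eq_one_left this
  have hd0 : d 0 = (m : ℂ) := by simp [hd]
  -- the key real identity: 1 + c * m = (1+3ε)/(1+2ε)
  have hkey : 1 + c * (m : ℂ) = ((((1 + 3 * ε) / (1 + 2 * ε) : ℝ)) : ℂ) := by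
    rw [hc]
    rw [show ((m : ℂ)) = (((m : ℝ) : ℂ)) by push_cast; ring]
    rw [← Complex.ofReal_mul, ← Complex.ofReal_one, ← Complex.ofReal_add]
    congr 1
    have hmR : (m : ℝ) ≠ 0 := Nat.cast_ne_zero.mpr hm0
    field_simp
    ring
  have hcconj : starRingEnd ℂ c = c := by rw [hc, Complex.conj_ofReal]
  have hpoly : revPoly n Q - Q =
      Polynomial.C ((((1 + 3 * ε) / (1 + 2 * ε) : ℝ)) : ℂ) * (1 - Polynomial.X ^ n) := by
    ext k
    rw [Polynomial.coeff_sub, hrev, hcoeff]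
    rw [Polynomial.coeff_C_mul, Polynomial.coeff_sub, Polynomial.coeff_one,
      Polynomial.coeff_X_pow]
    have h1 : 0 < n := Nat.pos_of_ne_zero hn0
    by_cases hk0 : k = 0
    · subst hk0
      rw [if_pos (Nat.zero_le n), Nat.sub_zero, hcoeff, if_pos rfl, if_neg (lt_irrefl n),
        if_pos rfl, if_neg (Ne.symm hn0), if_pos h1, hd0]
      rw [← hkey]
      simp only [mul_zero, sub_zero, map_one, zero_sub, mul_one]
      ring
    · by_cases hkn : k = n
      · subst hkn
        rw [if_pos le_rfl, Nat.sub_self, hcoeff, if_pos h1, hd0, if_neg (Ne.symm hn0),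
          if_pos rfl, if_neg (lt_irrefl k), if_neg hk0, ← hkey]
        simp only [map_sub, map_mul, map_zero, map_neg, hcconj, map_natCast, zero_sub, mul_neg, mul_one]
        ring
      · by_cases hkn' : k < n
        · rw [if_pos hkn'.le, hcoeff, if_neg (by omega : ¬ n - k = n),
            if_pos (by omega : n - k < n), if_neg hkn, if_pos hkn', if_neg hk0]
          simp only [map_sub, map_mul, map_zero, map_neg, hcconj, zero_sub, mul_zero, sub_zero]
          rw [hsym k hkn'.le]
          ring
        · rw [if_neg (by omega : ¬ k ≤ n), hcoeff k, if_neg hkn, if_neg (by omega : ¬ k < n),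
            if_neg hk0]
          ring
  refine ⟨hpoly, fun z hz => ?_⟩
  rw [hpoly]
  have hpos : (0:ℝ) < 1 + 2 * ε := by positivity
  have hposa : (0:ℝ) ≤ (1 + 3 * ε) / (1 + 2 * ε) := by positivity
  simp only [Polynomial.eval_mul, Polynomial.eval_C, Polynomial.eval_sub, Polynomial.eval_one,
    Polynomial.eval_pow, Polynomial.eval_X, norm_mul, Complex.norm_real]
  rw [Real.norm_eq_abs, abs_of_nonneg hposa]
  have h2 : ‖1 - z ^ n‖ ≤ 2 := by
    calc ‖1 - z ^ n‖ ≤ ‖(1:ℂ)‖ + ‖z ^ n‖ := norm_sub_le _ _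
    _ = 2 := by rw [norm_one, norm_pow, hz, one_pow]; norm_num
  calc (1 + 3 * ε) / (1 + 2 * ε) * ‖1 - z ^ n‖ ≤ (1 + 3 * ε) / (1 + 2 * ε) * 2 :=
        mul_le_mul_of_nonneg_left h2 hposa
    _ = 2 * (1 + 3 * ε) / (1 + 2 * ε) := by ring
end
end

section
/- There exist absolute constants c₀ > 0, C₀ > 0 and an integer n₀ such that for every even integer n ≥ n₀ and every ε ∈ (0,1) the polynomial Q(z) = z^n − c Σ_{j=0}^{m−1} Σ_{l=0}^{n−1} ξ_j^{−l} z^l, where m = n/2, c = (ε/m)/(1+2ε), and ξ_j = e^{2πij/n}, satisfies c₀ (1 + ε log n) ≤ sup_{|z|=1} |Q(z)| ≤ C₀ (1 + ε log n). -/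
/-!
Write `n = 2m` and `φ_t = π(2t+1)/n`. Splitting `∑_{j<m} ξ_j^{-i}` by the parity of `i` (a geometric
sum in a primitive `n`-th root of unity) gives
`∑_{j<m} ∑_{i<n} ξ_j^{-i} z^i = m + ∑_{t<m} (-i e^{iφ_t} / sin φ_t) z^{2t+1}`.
On the unit circle this is at most `m + ∑_t 1/sin φ_t`, and `∑_t 1/sin φ_t ≍ n log n` by
`2x(π-x)/π² ≤ sin x ≤ x` and harmonic sums; since `c n ≍ ε`, this gives the upper bound.
At `z₀ = e^{iπ/n}` we have `z₀^n = -1` and the odd terms become `2 cos φ_t - i cos 2φ_t / sin φ_t`.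
Their real parts cancel under the symmetry `φ ↦ π - φ`, so `|Q(z₀)| ≥ 1`, while
`Im Q(z₀) = c ∑_t cos 2φ_t / sin φ_t ≥ c (∑_t 1/sin φ_t - 2m) ≳ ε log n`.
-/

open Polynomial Real Set

noncomputable section

open Finset

lemma Real.two_mul_mul_pi_sub_div_sq_le_sin {x : ℝ} (hx0 : 0 ≤ x) (hxπ : x ≤ π) :
    2 * x * (π - x) / π ^ 2 ≤ sin x := by
  have hπ := pi_pos
  rcases le_total x (π / 2) with hx | hx
  · calc 2 * x * (π - x) / π ^ 2 = 2 / π * x * ((π - x) / π) := by field_simp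
      _ ≤ 2 / π * x * 1 := by gcongr; rw [div_le_one hπ]; linarith
      _ ≤ sin x := by simpa using mul_le_sin hx0 hx
  · calc 2 * x * (π - x) / π ^ 2 = 2 / π * (π - x) * (x / π) := by field_simp
      _ ≤ 2 / π * (π - x) * 1 := by gcongr; rw [div_le_one hπ]; linarith
      _ ≤ sin (π - x) := by simpa using mul_le_sin (x := π - x) (by linarith) (by linarith)
      _ = sin x := sin_pi_sub x

lemma Real.inv_sin_le_pi_div_two_mul_inv_add_inv {x : ℝ} (hx0 : 0 < x) (hxπ : x < π) :
    (sin x)⁻¹ ≤ π / 2 * (x⁻¹ + (π - x)⁻¹) := by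
  have hπ := pi_pos
  have hπx : 0 < π - x := by linarith
  calc (sin x)⁻¹ ≤ (2 * x * (π - x) / π ^ 2)⁻¹ :=
        inv_anti₀ (by positivity) (two_mul_mul_pi_sub_div_sq_le_sin hx0.le hxπ.le)
    _ = π / 2 * (x⁻¹ + (π - x)⁻¹) := by field_simp; ring

lemma sum_range_inv_two_mul_add_one_le_harmonic (m : ℕ) :
    ∑ t ∈ range m, (2 * t + 1 : ℝ)⁻¹ ≤ harmonic m := by
  push_cast [harmonic]
  gcongr with t
  linarith [(t.cast_nonneg : (0 : ℝ) ≤ t)]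

lemma harmonic_le_two_mul_sum_range_inv_two_mul_add_one (m : ℕ) :
    (harmonic m : ℝ) ≤ 2 * ∑ t ∈ range m, (2 * t + 1 : ℝ)⁻¹ := by
  push_cast [harmonic, mul_sum]
  gcongr with t
  rw [← div_eq_mul_inv, le_div_iff₀ (by positivity)]
  field_simp
  linarith

/-- The arguments `π(2t+1)/(2m)`, `t < m`, of the `2m`-th roots of `-1` in the upper half plane. -/
def oddAngle (m t : ℕ) : ℝ := π * (2 * t + 1) / (2 * m)

lemma oddAngle_pos {m t : ℕ} (ht : t < m) : 0 < oddAngle m t := by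
  have : (0 : ℝ) < m := by exact_mod_cast t.zero_le.trans_lt ht
  unfold oddAngle
  positivity

lemma oddAngle_lt_pi {m t : ℕ} (ht : t < m) : oddAngle m t < π := by
  have : (t : ℝ) + 1 ≤ m := by exact_mod_cast ht
  rw [oddAngle, div_lt_iff₀ (by linarith [(t.cast_nonneg : (0 : ℝ) ≤ t)])]
  nlinarith [pi_pos]

lemma sin_oddAngle_pos {m t : ℕ} (ht : t < m) : 0 < sin (oddAngle m t) :=
  sin_pos_of_pos_of_lt_pi (oddAngle_pos ht) (oddAngle_lt_pi ht)

lemma pi_sub_oddAngle {m t : ℕ} (ht : t < m) : π - oddAngle m t = oddAngle m (m - 1 - t) := by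
  have hm : (0 : ℝ) < m := by exact_mod_cast t.zero_le.trans_lt ht
  rw [oddAngle, oddAngle, Nat.cast_sub (by omega), Nat.cast_sub (by omega)]
  field_simp
  push_cast
  ring

lemma sum_range_comp_pi_sub_oddAngle {M : Type*} [AddCommMonoid M] (f : ℝ → M) (m : ℕ) :
    ∑ t ∈ range m, f (π - oddAngle m t) = ∑ t ∈ range m, f (oddAngle m t) := by
  rw [← sum_range_reflect]
  refine sum_congr rfl fun t ht => ?_
  have ht := mem_range.1 ht
  rw [pi_sub_oddAngle (by omega), show m - 1 - (m - 1 - t) = t by omega]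

lemma sum_range_cos_oddAngle (m : ℕ) : ∑ t ∈ range m, cos (oddAngle m t) = 0 := by
  have h := sum_range_comp_pi_sub_oddAngle cos m
  simp only [cos_pi_sub, sum_neg_distrib] at h
  linarith

lemma sum_range_inv_oddAngle (m : ℕ) :
    ∑ t ∈ range m, (oddAngle m t)⁻¹ = 2 * m / π * ∑ t ∈ range m, (2 * t + 1 : ℝ)⁻¹ := by
  simp only [oddAngle, inv_div, mul_sum]
  refine sum_congr rfl fun t _ => ?_
  field_simp

lemma mul_log_le_sum_range_inv_sin_oddAngle (m : ℕ) :
    m / π * log (m + 1) ≤ ∑ t ∈ range m, (sin (oddAngle m t))⁻¹ := by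
  have hlog : log (m + 1) ≤ 2 * ∑ t ∈ range m, (2 * t + 1 : ℝ)⁻¹ := by
    exact_mod_cast (log_add_one_le_harmonic m).trans
      (harmonic_le_two_mul_sum_range_inv_two_mul_add_one m)
  calc m / π * log (m + 1) ≤ m / π * (2 * ∑ t ∈ range m, (2 * t + 1 : ℝ)⁻¹) := by gcongr
    _ = ∑ t ∈ range m, (oddAngle m t)⁻¹ := by rw [sum_range_inv_oddAngle]; ring
    _ ≤ ∑ t ∈ range m, (sin (oddAngle m t))⁻¹ := by
        gcongr with t ht
        · exact sin_oddAngle_pos (mem_range.mp ht)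
        · exact sin_le (oddAngle_pos (mem_range.mp ht)).le

lemma sum_range_inv_sin_oddAngle_le (m : ℕ) :
    ∑ t ∈ range m, (sin (oddAngle m t))⁻¹ ≤ 2 * m * (1 + log m) := by
  calc ∑ t ∈ range m, (sin (oddAngle m t))⁻¹
      ≤ ∑ t ∈ range m, π / 2 * ((oddAngle m t)⁻¹ + (π - oddAngle m t)⁻¹) := by
        gcongr with t ht
        exact inv_sin_le_pi_div_two_mul_inv_add_inv (oddAngle_pos (mem_range.mp ht))
          (oddAngle_lt_pi (mem_range.mp ht))
    _ = π * ∑ t ∈ range m, (oddAngle m t)⁻¹ := by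
        rw [← mul_sum, sum_add_distrib, sum_range_comp_pi_sub_oddAngle (·⁻¹)]
        ring
    _ = 2 * m * ∑ t ∈ range m, (2 * t + 1 : ℝ)⁻¹ := by
        rw [sum_range_inv_oddAngle]; field_simp
    _ ≤ 2 * m * (1 + log m) := by
        gcongr
        exact (sum_range_inv_two_mul_add_one_le_harmonic m).trans (harmonic_le_one_add_log m)

lemma Finset.sum_range_two_mul {M : Type*} [AddCommMonoid M] (f : ℕ → M) (m : ℕ) :
    ∑ i ∈ range (2 * m), f i = ∑ t ∈ range m, f (2 * t) + ∑ t ∈ range m, f (2 * t + 1) := by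
  induction m with
  | zero => simp
  | succ m ih =>
    rw [show 2 * (m + 1) = 2 * m + 1 + 1 by ring, sum_range_succ, sum_range_succ, ih,
      sum_range_succ, sum_range_succ]
    abel

lemma geom_sum_eq_two_div_of_pow_eq_neg_one {K : Type*} [Field K] {w : K} {m : ℕ}
    (hw : w ≠ 1) (hwm : w ^ m = -1) : ∑ j ∈ range m, w ^ j = 2 / (1 - w) := by
  rw [geom_sum_eq hw, hwm, div_eq_div_iff (sub_ne_zero.2 hw) (sub_ne_zero.2 hw.symm)]
  ring

lemma IsPrimitiveRoot.sum_range_inv_pow_pow {K : Type*} [Field K] {ζ : K} {m k : ℕ}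
    (hζ : IsPrimitiveRoot ζ (2 * m)) (hk0 : k ≠ 0) (hk : k < 2 * m) :
    ∑ j ∈ range m, (ζ ^ j)⁻¹ ^ k = if Even k then 0 else 2 / (1 - (ζ ^ k)⁻¹) := by
  have hm : m ≠ 0 := by omega
  have hζm : ζ ^ m = -1 := by
    refine IsPrimitiveRoot.eq_neg_one_of_two_right ?_
    simpa [Nat.mul_div_cancel _ (Nat.pos_of_ne_zero hm)] using
      hζ.pow_of_dvd hm (dvd_mul_left m 2)
  have hw : (ζ ^ k)⁻¹ ≠ 1 := inv_ne_one.2 (hζ.pow_ne_one_of_pos_of_lt hk0 hk)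
  have hwm : (ζ ^ k)⁻¹ ^ m = ((-1) ^ k)⁻¹ := by rw [inv_pow, ← pow_mul, mul_comm, pow_mul, hζm]
  have hswap : ∀ j, (ζ ^ j)⁻¹ ^ k = (ζ ^ k)⁻¹ ^ j := fun j => by
    rw [inv_pow, inv_pow, ← pow_mul, ← pow_mul, mul_comm]
  simp only [hswap]
  split_ifs with he
  · rw [geom_sum_eq hw, hwm, he.neg_one_pow]
    simp
  · refine geom_sum_eq_two_div_of_pow_eq_neg_one hw ?_
    rw [hwm, (Nat.not_even_iff_odd.1 he).neg_one_pow, inv_neg, inv_one]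

lemma Complex.two_div_one_sub_inv_exp_two_mul (φ : ℝ) (hφ : Real.sin φ ≠ 0) :
    2 / (1 - (exp (2 * φ * I))⁻¹) = -I * exp (φ * I) / Real.sin φ := by
  have hsin : ((Real.sin φ : ℝ) : ℂ) = ((exp (φ * I))⁻¹ - exp (φ * I)) * I / 2 := by
    rw [ofReal_sin, Complex.sin, neg_mul, exp_neg]
  have hs : ((Real.sin φ : ℝ) : ℂ) ≠ 0 := ofReal_ne_zero.2 hφ
  have he := exp_ne_zero (φ * I)
  rw [show 2 * (φ : ℂ) * I = φ * I + φ * I by ring, exp_add]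
  generalize exp (φ * I) = e at hsin he ⊢
  have hsub : 1 - (e * e)⁻¹ = 2 * I * Real.sin φ * e⁻¹ := by
    rw [hsin]
    field_simp
    linear_combination (e ^ 2 - 1) * I_sq
  rw [hsub]
  field_simp
  linear_combination I_sq

lemma Complex.neg_I_mul_exp_div_sin_mul_exp (φ : ℝ) (hφ : Real.sin φ ≠ 0) :
    -I * exp (φ * I) / Real.sin φ * exp (φ * I)
      = ((2 * Real.cos φ : ℝ) : ℂ) - ((Real.cos (2 * φ) / Real.sin φ : ℝ) : ℂ) * I := by
  rw [div_mul_eq_mul_div, mul_assoc, ← exp_add, show (φ : ℂ) * I + φ * I = (2 * φ : ℝ) * I by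
    push_cast; ring, exp_mul_I, ← ofReal_cos, ← ofReal_sin, Real.sin_two_mul]
  simp only [ofReal_div, ofReal_mul, ofReal_ofNat]
  generalize Real.sin φ = s at hφ ⊢
  have hs : (s : ℂ) ≠ 0 := ofReal_ne_zero.2 hφ
  field_simp
  linear_combination (-2 * s * Real.cos φ : ℂ) * I_sq

/-- `∑_{j<m} K_n(z, ξ_j)`, where `K_n(z, ξ) = ∑_{i<n} ξ⁻ⁱ zⁱ` and `ξ_j = e^{2πij/n}`. -/
def kernelSum (n m : ℕ) (z : ℂ) : ℂ :=
  ∑ j ∈ range m, ∑ i ∈ range n, (Complex.exp (2 * π * (j : ℝ) / n * Complex.I))⁻¹ ^ i * z ^ i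

lemma kernelSum_two_mul_eq {m : ℕ} (hm : 0 < m) (z : ℂ) :
    kernelSum (2 * m) m z = m + ∑ t ∈ range m, -Complex.I * Complex.exp (oddAngle m t * Complex.I)
      / sin (oddAngle m t) * z ^ (2 * t + 1) := by
  set ζ := Complex.exp (2 * π * Complex.I / (2 * m : ℕ))
  have hζ : IsPrimitiveRoot ζ (2 * m) := Complex.isPrimitiveRoot_exp _ (by omega)
  have hξ : ∀ j : ℕ, Complex.exp (2 * π * (j : ℝ) / (2 * m : ℕ) * Complex.I) = ζ ^ j :=
    fun j => by rw [← Complex.exp_nat_mul]; congr 1; push_cast; ring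
  have hζodd : ∀ t : ℕ, ζ ^ (2 * t + 1) = Complex.exp (2 * oddAngle m t * Complex.I) :=
    fun t => by rw [← Complex.exp_nat_mul]; congr 1; push_cast [oddAngle]; field_simp
  simp only [kernelSum, hξ]
  rw [sum_comm]
  simp only [← sum_mul]
  rw [sum_range_two_mul]
  congr 1
  · rw [sum_eq_single_of_mem 0 (mem_range.2 hm)]
    · simp
    · intro t ht ht0
      rw [hζ.sum_range_inv_pow_pow (by omega) (by have := mem_range.1 ht; omega),
        if_pos (even_two_mul t), zero_mul]
  · refine sum_congr rfl fun t ht => ?_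
    rw [hζ.sum_range_inv_pow_pow (by omega) (by have := mem_range.1 ht; omega),
      if_neg (Nat.not_even_iff_odd.2 (odd_two_mul_add_one t)), hζodd,
      Complex.two_div_one_sub_inv_exp_two_mul _ (sin_oddAngle_pos (mem_range.1 ht)).ne']

lemma norm_kernelSum_le {m : ℕ} (hm : 0 < m) {z : ℂ} (hz : ‖z‖ = 1) :
    ‖kernelSum (2 * m) m z‖ ≤ m + 2 * m * (1 + log m) := by
  rw [kernelSum_two_mul_eq hm]
  calc _ ≤ ‖(m : ℂ)‖ + ∑ t ∈ range m, ‖-Complex.I * Complex.exp (oddAngle m t * Complex.I) /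
          sin (oddAngle m t) * z ^ (2 * t + 1)‖ :=
        (norm_add_le _ _).trans (add_le_add_right (norm_sum_le _ _) _)
    _ = m + ∑ t ∈ range m, (sin (oddAngle m t))⁻¹ := by
        congr 1
        · simp
        · refine sum_congr rfl fun t ht => ?_
          rw [norm_mul, norm_div, norm_mul, norm_pow, hz, Complex.norm_real,
            Real.norm_of_nonneg (sin_oddAngle_pos (mem_range.1 ht)).le, norm_neg, Complex.norm_I,
            Complex.norm_exp_ofReal_mul_I]
          simp
    _ ≤ m + 2 * m * (1 + log m) := by grw [sum_range_inv_sin_oddAngle_le]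

lemma exp_pi_div_two_mul_mul_I_pow_two_mul_add_one (m t : ℕ) :
    Complex.exp (π / (2 * m) * Complex.I) ^ (2 * t + 1) =
      Complex.exp (oddAngle m t * Complex.I) := by
  rw [← Complex.exp_nat_mul]
  congr 1
  push_cast [oddAngle]
  ring

lemma kernelSum_exp_pi_div_two_mul {m : ℕ} (hm : 0 < m) :
    kernelSum (2 * m) m (Complex.exp (π / (2 * m) * Complex.I)) = m + ∑ t ∈ range m,
      (((2 * cos (oddAngle m t) : ℝ) : ℂ) -
        ((cos (2 * oddAngle m t) / sin (oddAngle m t) : ℝ) : ℂ) * Complex.I) := by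
  rw [kernelSum_two_mul_eq hm]
  congr 1
  refine sum_congr rfl fun t ht => ?_
  rw [exp_pi_div_two_mul_mul_I_pow_two_mul_add_one m t,
    Complex.neg_I_mul_exp_div_sin_mul_exp _ (sin_oddAngle_pos (mem_range.1 ht)).ne']

lemma re_kernelSum_exp_pi_div_two_mul {m : ℕ} (hm : 0 < m) :
    (kernelSum (2 * m) m (Complex.exp (π / (2 * m) * Complex.I))).re = m := by
  simp only [kernelSum_exp_pi_div_two_mul hm, Complex.add_re, Complex.natCast_re, Complex.re_sum,
    Complex.sub_re, Complex.ofReal_re, Complex.re_ofReal_mul, Complex.I_re, mul_zero, sub_zero,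
    ← mul_sum, sum_range_cos_oddAngle, add_zero]

lemma im_kernelSum_exp_pi_div_two_mul_le {m : ℕ} (hm : 0 < m) :
    (kernelSum (2 * m) m (Complex.exp (π / (2 * m) * Complex.I))).im
      ≤ 2 * m - m / π * log (m + 1) := by
  have hterm : ∀ t ∈ range m,
      (sin (oddAngle m t))⁻¹ - 2 ≤ cos (2 * oddAngle m t) / sin (oddAngle m t) := by
    intro t ht
    have hs := sin_oddAngle_pos (mem_range.1 ht)
    rw [cos_two_mul_eq_one_sub, le_div_iff₀ hs]
    nlinarith [sin_le_one (oddAngle m t), inv_mul_cancel₀ hs.ne']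
  have hsum := sum_le_sum hterm
  rw [sum_sub_distrib, sum_const, card_range, nsmul_eq_mul] at hsum
  simp only [kernelSum_exp_pi_div_two_mul hm, Complex.add_im, Complex.natCast_im, Complex.im_sum,
    Complex.sub_im, Complex.ofReal_im, Complex.im_ofReal_mul, Complex.I_im, mul_one, zero_sub,
    zero_add, sum_neg_distrib]
  linarith [mul_log_le_sum_range_inv_sin_oddAngle m]

lemma norm_pow_sub_mul_kernelSum_le {m : ℕ} (hm : 0 < m) {c : ℝ} (hc : 0 ≤ c) {z : ℂ}
    (hz : ‖z‖ = 1) :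
    ‖z ^ (2 * m) - c * kernelSum (2 * m) m z‖ ≤ 1 + c * (m + 2 * m * (1 + log m)) :=
  calc _ ≤ ‖z ^ (2 * m)‖ + ‖(c : ℂ) * kernelSum (2 * m) m z‖ := norm_sub_le _ _
    _ = 1 + c * ‖kernelSum (2 * m) m z‖ := by
        rw [norm_pow, hz, one_pow, norm_mul, Complex.norm_real, Real.norm_of_nonneg hc]
    _ ≤ 1 + c * (m + 2 * m * (1 + log m)) := by grw [norm_kernelSum_le hm hz]

lemma le_norm_exp_pi_div_two_mul_pow_sub_mul_kernelSum {m : ℕ} (hm : 0 < m) {c : ℝ}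
    (hc : 0 ≤ c) :
    let z₀ := Complex.exp (π / (2 * m) * Complex.I)
    1 + c * m ≤ ‖z₀ ^ (2 * m) - c * kernelSum (2 * m) m z₀‖ ∧
      c * (m / π * log (m + 1) - 2 * m) ≤ ‖z₀ ^ (2 * m) - c * kernelSum (2 * m) m z₀‖ := by
  intro z₀
  have hz₀ : z₀ ^ (2 * m) = -1 := by
    have : (m : ℂ) ≠ 0 := by exact_mod_cast hm.ne'
    rw [← Complex.exp_nat_mul, ← Complex.exp_pi_mul_I]
    congr 1
    push_cast
    field_simp
  have hre : (z₀ ^ (2 * m) - c * kernelSum (2 * m) m z₀).re = -(1 + c * m) := by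
    rw [hz₀, Complex.sub_re, Complex.re_ofReal_mul, re_kernelSum_exp_pi_div_two_mul hm,
      Complex.neg_re, Complex.one_re]
    ring
  have him : c * (m / π * log (m + 1) - 2 * m)
      ≤ (z₀ ^ (2 * m) - c * kernelSum (2 * m) m z₀).im := by
    rw [hz₀, Complex.sub_im, Complex.im_ofReal_mul, Complex.neg_im, Complex.one_im]
    linarith [mul_le_mul_of_nonneg_left (im_kernelSum_exp_pi_div_two_mul_le hm) hc]
  constructor
  · calc 1 + c * m = -(z₀ ^ (2 * m) - c * kernelSum (2 * m) m z₀).re := by rw [hre, neg_neg]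
      _ ≤ ‖z₀ ^ (2 * m) - c * kernelSum (2 * m) m z₀‖ :=
        (neg_le_abs _).trans (Complex.abs_re_le_norm _)
  · exact him.trans ((le_abs_self _).trans (Complex.abs_im_le_norm _))

lemma div_div_one_add_two_mul_mul_mem_Icc {m : ℕ} (hm : 0 < m) {ε : ℝ}
    (hε : ε ∈ Ioo (0 : ℝ) 1) : ε / m / (1 + 2 * ε) * m ∈ Icc (ε / 3) ε := by
  obtain ⟨hε0, hε1⟩ := hε
  rw [div_right_comm, div_mul_cancel₀ _ (by positivity)]
  exact ⟨div_le_div_of_nonneg_left hε0.le (by positivity) (by linarith),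
    div_le_self hε0.le (by linarith)⟩

lemma exists_norm_eq_one_le_norm_pow_sub_mul_kernelSum {m : ℕ} (hm : 0 < m) {ε : ℝ}
    (hε : ε ∈ Ioo (0 : ℝ) 1) : ∃ z : ℂ, ‖z‖ = 1 ∧ 1 / 50 * (1 + ε * log (2 * m : ℕ))
      ≤ ‖z ^ (2 * m) - ((ε / m / (1 + 2 * ε) : ℝ) : ℂ) * kernelSum (2 * m) m z‖ := by
  obtain ⟨hcm3, hcm1⟩ := div_div_one_add_two_mul_mul_mem_Icc hm hε
  obtain ⟨hε0, hε1⟩ := hε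
  set c := ε / m / (1 + 2 * ε)
  obtain ⟨hnorm_one, hnorm_im⟩ :=
    le_norm_exp_pi_div_two_mul_pow_sub_mul_kernelSum hm (c := c) (by positivity)
  refine ⟨_, by simpa using Complex.norm_exp_ofReal_mul_I (π / (2 * m)), ?_⟩
  have hlog : log (2 * m : ℕ) ≤ 1 + log (m + 1) := by
    rw [Nat.cast_mul, Nat.cast_two, log_mul two_ne_zero (by positivity)]
    have hm1 : log m ≤ log (m + 1) := log_le_log (by positivity) (by linarith)
    linarith [log_two_lt_d9]
  have hlog0 : 0 ≤ log (m + 1) := log_nonneg (by linarith [(m.cast_nonneg : (0 : ℝ) ≤ m)])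
  have hεπ : ε / (3 * π) ≤ 1 := by
    rw [div_le_one (by positivity)]
    linarith [pi_gt_three]
  have hgrowth : ε * log (2 * m : ℕ) / 12 - 3 ≤ c * (m / π * log (m + 1) - 2 * m) :=
    calc ε * log (2 * m : ℕ) / 12 - 3 ≤ ε * (1 + log (m + 1)) / (3 * π) - 3 := by
          gcongr
          linarith [pi_le_four]
      _ ≤ ε / (3 * π) * log (m + 1) - 2 * ε := by
          rw [mul_add, mul_one, add_div, ← mul_div_right_comm]
          linarith
      _ ≤ c * m / π * log (m + 1) - 2 * (c * m) := by
          have hεc : ε / (3 * π) ≤ c * m / π := by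
            rw [← div_div]
            exact div_le_div_of_nonneg_right hcm3 pi_pos.le
          linarith [mul_le_mul_of_nonneg_right hεc hlog0]
      _ = c * (m / π * log (m + 1) - 2 * m) := by ring
  have hL : 0 ≤ ε * log (2 * m : ℕ) := mul_nonneg hε0.le (log_nonneg (by norm_cast; omega))
  -- `1/50 * (1 + x) ≤ 151/200 * 1 + 49/200 * (x/12 - 3)` for `x ≥ 0`
  linarith

lemma norm_pow_sub_mul_kernelSum_le_four_mul {m : ℕ} (hm : 0 < m) {ε : ℝ}
    (hε : ε ∈ Ioo (0 : ℝ) 1) {z : ℂ} (hz : ‖z‖ = 1) :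
    ‖z ^ (2 * m) - ((ε / m / (1 + 2 * ε) : ℝ) : ℂ) * kernelSum (2 * m) m z‖
      ≤ 4 * (1 + ε * log (2 * m : ℕ)) := by
  have hcm := (div_div_one_add_two_mul_mul_mem_Icc hm hε).2
  obtain ⟨hε0, hε1⟩ := hε
  set c := ε / m / (1 + 2 * ε)
  have hlog : log m ≤ log (2 * m : ℕ) := log_le_log (by positivity) (by push_cast; linarith)
  have hlog0 : 0 ≤ log m := log_nonneg (by exact_mod_cast hm)
  have hcmlog : c * m * log m ≤ ε * log (2 * m : ℕ) := mul_le_mul hcm hlog hlog0 hε0.le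
  calc _ ≤ 1 + c * (m + 2 * m * (1 + log m)) :=
        norm_pow_sub_mul_kernelSum_le hm (by positivity) hz
    _ = 1 + 3 * (c * m) + 2 * (c * m * log m) := by ring
    _ ≤ 4 * (1 + ε * log (2 * m : ℕ)) := by linarith [mul_nonneg hε0.le (hlog0.trans hlog)]

/-- Growth estimate for Rakhmanov's polynomial: the uniform norm on the unit circle of
`Q(z) = z^n − c Σ_{j<m} Σ_{l<n} ξ_j^{−l} z^l` (with `m = n/2`, `c = (ε/m)/(1+2ε)`,
`ξ_j = e^{2πij/n}`) is comparable to `1 + ε log n`. -/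
theorem rakhmanov_polynomial_growth :
    ∃ (c₀ C₀ : ℝ) (n₀ : ℕ), 0 < c₀ ∧ 0 < C₀ ∧
      ∀ n : ℕ, n₀ ≤ n → Even n → ∀ ε : ℝ, ε ∈ Set.Ioo (0 : ℝ) 1 →
        ∀ Q : Polynomial ℂ,
          Q = Polynomial.X ^ n -
            Polynomial.C ((((ε / (n / 2 : ℕ)) / (1 + 2 * ε) : ℝ)) : ℂ) *
              ∑ j ∈ Finset.range (n / 2), ∑ i ∈ Finset.range n,
                Polynomial.C ((Complex.exp (2 * π * (j : ℝ) / n * Complex.I))⁻¹ ^ i) *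
                  Polynomial.X ^ i →
          (∃ z : ℂ, ‖z‖ = 1 ∧ c₀ * (1 + ε * Real.log n) ≤ ‖Q.eval z‖) ∧
          (∀ z : ℂ, ‖z‖ = 1 → ‖Q.eval z‖ ≤ C₀ * (1 + ε * Real.log n)) := by
  refine ⟨1 / 50, 4, 2, by norm_num, by norm_num, ?_⟩
  intro n hn hev ε hε Q hQ
  obtain ⟨m, rfl⟩ := hev.two_dvd
  have hm : 0 < m := by omega
  have heval : ∀ z, Q.eval z
      = z ^ (2 * m) - ((ε / m / (1 + 2 * ε) : ℝ) : ℂ) * kernelSum (2 * m) m z := fun z => by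
    rw [hQ, Nat.mul_div_cancel_left m two_pos]
    simp only [eval_sub, eval_pow, eval_X, eval_mul, eval_C, eval_finsetSum, kernelSum]
  simp only [heval]
  exact ⟨exists_norm_eq_one_le_norm_pow_sub_mul_kernelSum hm hε,
    fun z hz => norm_pow_sub_mul_kernelSum_le_four_mul hm hε hz⟩
end
end

section
/- There exist absolute constants c > 0, C > 0 and an integer n₀ such that for every integer n ≥ n₀ there exists a polynomial M of degree at most n−1 with M(0) = 0 satisfying: (i) |Re M(e^{iθ})| ≤ 1 for all θ ∈ [0,2π); (ii) ∫₀^{2π} Re M(e^{iθ}) dθ = 0; and (iii) c log n ≤ sup_{θ ∈ [0,2π)} |Im M(e^{iθ})| ≤ C log n. -/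
/-!
The witness is `M(z) = -(i/3) ∑_{k<n} (rz)^k/k` with `r = 1 - 1/n`: a third of `-i` times a
truncation of the series of `log (1 - rz)⁻¹`. For `|z| ≤ 1` the truncation error is at most
`r^n / ((1 - r) n) ≤ 1`. So `3 Re M` is `arg (1 - rz)⁻¹ ∈ [-π/2, π/2]` up to that error, giving
`|Re M| ≤ (π/2 + 1)/3 ≤ 1`, while `3 |Im M|` is the modulus of the real part of the partial sum,
which is at most `∑ r^k/k ≤ log (1 - r)⁻¹ = log n` everywhere and at least `log n - 1` at `z = 1`.
The mean of `Re M` over the circle is `Re M(0) = 0`.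
-/

open MeasureTheory Polynomial Real Set

noncomputable section

lemma inv_one_sub_le_of_le_one_sub_one_div {a x : ℝ} (ha : 0 < a) (hx : x ≤ 1 - 1 / a) :
    (1 - x)⁻¹ ≤ a := by
  rw [inv_le_comm₀ (by linarith [one_div_pos.mpr ha]) ha, ← one_div]
  linarith

namespace Complex

lemma norm_log_one_sub_inv_sub_sum_range_le (n : ℕ) {w : ℂ} (hw : ‖w‖ < 1) :
    ‖log (1 - w)⁻¹ - ∑ k ∈ Finset.range (n + 1), w ^ k / k‖ ≤
      ‖w‖ ^ (n + 1) * (1 - ‖w‖)⁻¹ / (n + 1) := by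
  have h := norm_log_one_sub_inv_add_logTaylor_neg_le n hw
  have hsum : logTaylor (n + 1) (-w) = -∑ k ∈ Finset.range (n + 1), w ^ k / k := by
    rw [logTaylor, ← Finset.sum_neg_distrib]
    refine Finset.sum_congr rfl fun k _ => ?_
    rw [neg_pow w, pow_succ, mul_mul_mul_comm, ← pow_add, Even.neg_one_pow ⟨k, rfl⟩]
    ring
  rwa [hsum, ← sub_eq_add_neg] at h

lemma abs_im_log_one_sub_inv_le {w : ℂ} (hw : ‖w‖ ≤ 1) : |(log (1 - w)⁻¹).im| ≤ π / 2 := by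
  rw [log_im, abs_arg_le_pi_div_two_iff, inv_re]
  have : w.re ≤ 1 := (re_le_norm w).trans hw
  exact div_nonneg (by simpa using this) (normSq_nonneg _)

lemma norm_sum_range_pow_div_le {w : ℂ} (hw : ‖w‖ < 1) (n : ℕ) :
    ‖∑ k ∈ Finset.range n, w ^ k / k‖ ≤ Real.log (1 - ‖w‖)⁻¹ := by
  have hs : HasSum (fun k : ℕ => ‖w‖ ^ k / k) (Real.log (1 - ‖w‖)⁻¹) := by
    have := hasSum_taylorSeries_neg_log (z := (‖w‖ : ℂ)) (by simpa using hw)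
    rw [Real.log_inv, ← hasSum_ofReal]
    convert this using 1
    · ext k; push_cast; rfl
    · rw [ofReal_neg, ofReal_log (by linarith [norm_nonneg w])]; push_cast; rfl
  calc ‖∑ k ∈ Finset.range n, w ^ k / k‖ ≤ ∑ k ∈ Finset.range n, ‖w‖ ^ k / k := by
        refine (norm_sum_le _ _).trans_eq (Finset.sum_congr rfl fun k _ => ?_)
        simp
    _ ≤ _ := sum_le_hasSum _ (fun k _ => by positivity) hs

lemma norm_log_one_sub_inv_sub_sum_range_le_one {n : ℕ} (hn : 1 ≤ n) {w : ℂ}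
    (hw : ‖w‖ ≤ 1 - 1 / n) : ‖log (1 - w)⁻¹ - ∑ k ∈ Finset.range n, w ^ k / k‖ ≤ 1 := by
  have hpos : (0 : ℝ) < n := by exact_mod_cast hn
  have hw1 : ‖w‖ < 1 := hw.trans_lt (sub_lt_self _ (one_div_pos.mpr hpos))
  have hinv := inv_one_sub_le_of_le_one_sub_one_div hpos hw
  have hpow : ‖w‖ ^ n ≤ 1 := pow_le_one₀ (norm_nonneg w) hw1.le
  obtain ⟨m, rfl⟩ := Nat.exists_eq_add_of_le' hn
  push_cast at hpos hinv
  refine (norm_log_one_sub_inv_sub_sum_range_le m hw1).trans ?_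
  rw [div_le_one hpos]
  calc ‖w‖ ^ (m + 1) * (1 - ‖w‖)⁻¹ ≤ 1 * (m + 1) := by gcongr
    _ = m + 1 := one_mul _

lemma abs_im_sum_range_le {n : ℕ} (hn : 1 ≤ n) {w : ℂ} (hw : ‖w‖ ≤ 1 - 1 / n) :
    |(∑ k ∈ Finset.range n, w ^ k / k).im| ≤ π / 2 + 1 := by
  set S := ∑ k ∈ Finset.range n, w ^ k / k
  have harg := abs_im_log_one_sub_inv_le (hw.trans (sub_le_self _ (by positivity)))
  have herr := (abs_im_le_norm _).trans (norm_log_one_sub_inv_sub_sum_range_le_one hn hw)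
  rw [sub_im, abs_sub_comm] at herr
  linarith [abs_sub_abs_le_abs_sub S.im (log (1 - w)⁻¹).im]

lemma norm_sum_range_le_log {n : ℕ} (hn : 1 ≤ n) {w : ℂ} (hw : ‖w‖ ≤ 1 - 1 / n) :
    ‖∑ k ∈ Finset.range n, w ^ k / k‖ ≤ Real.log n := by
  have hpos : (0 : ℝ) < n := by exact_mod_cast hn
  have hw1 : ‖w‖ < 1 := hw.trans_lt (sub_lt_self _ (one_div_pos.mpr hpos))
  refine (norm_sum_range_pow_div_le hw1 n).trans (Real.log_le_log ?_ ?_)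
  · exact inv_pos.mpr (sub_pos.mpr hw1)
  · exact inv_one_sub_le_of_le_one_sub_one_div hpos hw

lemma norm_one_sub_one_div_natCast {n : ℕ} (hn : 1 ≤ n) : ‖(1 - 1 / n : ℂ)‖ = 1 - 1 / n := by
  have hpos : (0 : ℝ) < n := by exact_mod_cast hn
  have : (1 - 1 / n : ℂ) = ((1 - 1 / n : ℝ) : ℂ) := by push_cast; rfl
  rw [this, norm_real, Real.norm_eq_abs, abs_of_nonneg]
  rw [sub_nonneg, div_le_one hpos]
  exact_mod_cast hn

lemma log_sub_one_le_re_sum_range {n : ℕ} (hn : 1 ≤ n) :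
    Real.log n - 1 ≤ (∑ k ∈ Finset.range n, (1 - 1 / n : ℂ) ^ k / k).re := by
  have hlog : (log (1 - (1 - 1 / n : ℂ))⁻¹).re = Real.log n := by
    rw [log_re, sub_sub_cancel, one_div, inv_inv, norm_natCast]
  have herr := (abs_re_le_norm _).trans
    (norm_log_one_sub_inv_sub_sum_range_le_one hn (norm_one_sub_one_div_natCast hn).le)
  rw [sub_re, hlog] at herr
  linarith [le_abs_self (Real.log n - (∑ k ∈ Finset.range n, (1 - 1 / n : ℂ) ^ k / k).re)]

end Complex

open Complex in
lemma integral_exp_mul_I_pow (k : ℕ) :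
    ∫ θ in (0 : ℝ)..2 * π, exp (θ * I) ^ k = if k = 0 then (2 * π : ℂ) else 0 := by
  split_ifs with hk
  · simp [hk]
  have hc : (k * I : ℂ) ≠ 0 := mul_ne_zero (Nat.cast_ne_zero.mpr hk) I_ne_zero
  have hperiod : exp (k * I * (2 * π : ℝ)) = 1 := by
    rw [← exp_nat_mul_two_pi_mul_I k]; push_cast; ring_nf
  have hpow (θ : ℝ) : exp (θ * I) ^ k = exp (k * I * θ) := by
    rw [← Complex.exp_nat_mul]; ring_nf
  simp_rw [hpow]
  rw [integral_exp_mul_complex hc, hperiod]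
  simp

lemma integral_Ico_eval_exp_mul_I (p : ℂ[X]) :
    ∫ θ in Ico 0 (2 * π), p.eval (Complex.exp (θ * Complex.I)) = 2 * π * p.coeff 0 := by
  rw [integral_Ico_eq_integral_Ioc, ← intervalIntegral.integral_of_le (by positivity)]
  simp_rw [eval_eq_sum_range]
  rw [intervalIntegral.integral_finsetSum fun k _ => by
    exact (Continuous.intervalIntegrable (by fun_prop) _ _)]
  simp_rw [intervalIntegral.integral_const_mul, integral_exp_mul_I_pow]
  simp [Finset.sum_ite_eq', mul_comm]

lemma integral_Ico_re_eval_exp_mul_I (p : ℂ[X]) :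
    ∫ θ in Ico 0 (2 * π), (p.eval (Complex.exp (θ * Complex.I))).re =
      2 * π * (p.coeff 0).re := by
  have hint : IntegrableOn (fun θ : ℝ => p.eval (Complex.exp (θ * Complex.I))) (Ico 0 (2 * π)) :=
    (Continuous.integrableOn_Icc (by fun_prop)).mono_set Ico_subset_Icc_self
  have h := integral_re hint
  simp only [RCLike.re_to_complex] at h
  rw [h, integral_Ico_eval_exp_mul_I]
  simp

open Complex in
def logPoly (n : ℕ) : ℂ[X] :=
  ∑ k ∈ Finset.range n, C (-(I / 3) * (1 - 1 / n) ^ k / k) * X ^ k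

lemma natDegree_logPoly_le (n : ℕ) : (logPoly n).natDegree ≤ n - 1 :=
  natDegree_sum_le_of_forall_le _ _ fun k hk =>
    (natDegree_C_mul_X_pow_le _ k).trans (by have := Finset.mem_range.mp hk; omega)

lemma coeff_zero_logPoly (n : ℕ) : (logPoly n).coeff 0 = 0 := by
  simp [logPoly]

open Complex in
lemma eval_logPoly (n : ℕ) (z : ℂ) :
    (logPoly n).eval z = -(I / 3) * ∑ k ∈ Finset.range n, ((1 - 1 / n) * z) ^ k / k := by
  simp only [logPoly, eval_finsetSum, eval_mul, eval_C, eval_pow, eval_X, Finset.mul_sum]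
  refine Finset.sum_congr rfl fun k _ => ?_
  rw [mul_pow]
  ring

section logPoly

open Complex

lemma re_neg_I_div_three_mul (s : ℂ) : (-(I / 3) * s).re = s.im / 3 := by
  simp [mul_re]; ring

lemma im_neg_I_div_three_mul (s : ℂ) : (-(I / 3) * s).im = -(s.re / 3) := by
  simp [mul_im]; ring

lemma norm_one_sub_one_div_mul_le {n : ℕ} (hn : 1 ≤ n) {z : ℂ} (hz : ‖z‖ ≤ 1) :
    ‖(1 - 1 / n) * z‖ ≤ 1 - 1 / n := by
  rw [norm_mul, norm_one_sub_one_div_natCast hn]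
  exact mul_le_of_le_one_right (norm_one_sub_one_div_natCast hn ▸ norm_nonneg _) hz

lemma abs_re_eval_logPoly_le_one {n : ℕ} (hn : 1 ≤ n) {z : ℂ} (hz : ‖z‖ ≤ 1) :
    |((logPoly n).eval z).re| ≤ 1 := by
  have hS := abs_im_sum_range_le hn (norm_one_sub_one_div_mul_le hn hz)
  rw [eval_logPoly, re_neg_I_div_three_mul, abs_div, Nat.abs_ofNat]
  linarith [pi_le_four]

lemma abs_im_eval_logPoly_le {n : ℕ} (hn : 1 ≤ n) {z : ℂ} (hz : ‖z‖ ≤ 1) :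
    |((logPoly n).eval z).im| ≤ Real.log n / 3 := by
  have hS := norm_sum_range_le_log hn (norm_one_sub_one_div_mul_le hn hz)
  rw [eval_logPoly, im_neg_I_div_three_mul, abs_neg, abs_div, Nat.abs_ofNat]
  linarith [abs_re_le_norm (∑ k ∈ Finset.range n, ((1 - 1 / n : ℂ) * z) ^ k / k)]

lemma log_sub_one_le_three_mul_abs_im_eval_logPoly_one {n : ℕ} (hn : 1 ≤ n) :
    Real.log n - 1 ≤ 3 * |((logPoly n).eval 1).im| := by
  have hS := log_sub_one_le_re_sum_range hn
  rw [eval_logPoly, mul_one, im_neg_I_div_three_mul, abs_neg, abs_div, Nat.abs_ofNat]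
  linarith [le_abs_self (∑ k ∈ Finset.range n, (1 - 1 / n : ℂ) ^ k / k).re]

end logPoly

lemma two_le_log_eight : 2 ≤ Real.log 8 := by
  have : Real.log 8 = 3 * Real.log 2 := by
    rw [show (8 : ℝ) = 2 ^ 3 by norm_num, Real.log_pow]; norm_num
  linarith [Real.log_two_gt_d9]

/-- Existence of an analytic polynomial of degree at most `n−1` vanishing at `0`, whose
real part on the circle is bounded by `1` with zero mean, while its imaginary part has
uniform norm of order `log n`. -/
theorem exists_log_polynomial :
    ∃ (c C : ℝ) (n₀ : ℕ), 0 < c ∧ 0 < C ∧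
      ∀ n : ℕ, n₀ ≤ n →
        ∃ M : Polynomial ℂ,
          M.natDegree ≤ n - 1 ∧ M.coeff 0 = 0 ∧
          (∀ θ ∈ Set.Ico (0 : ℝ) (2 * π),
            |(M.eval (Complex.exp (θ * Complex.I))).re| ≤ 1) ∧
          (∫ θ in Set.Ico (0 : ℝ) (2 * π),
            (M.eval (Complex.exp (θ * Complex.I))).re) = 0 ∧
          (∃ θ ∈ Set.Ico (0 : ℝ) (2 * π),
            c * Real.log n ≤ |(M.eval (Complex.exp (θ * Complex.I))).im|) ∧
          (∀ θ ∈ Set.Ico (0 : ℝ) (2 * π),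
            |(M.eval (Complex.exp (θ * Complex.I))).im| ≤ C * Real.log n) := by
  refine ⟨1 / 6, 1 / 3, 8, by norm_num, by norm_num, fun n hn => ?_⟩
  have hn1 : 1 ≤ n := by omega
  have hcircle (θ : ℝ) : ‖Complex.exp (θ * Complex.I)‖ ≤ 1 :=
    (Complex.norm_exp_ofReal_mul_I θ).le
  have hlog : 2 ≤ Real.log n :=
    two_le_log_eight.trans (Real.log_le_log (by norm_num) (by exact_mod_cast hn))
  refine ⟨logPoly n, natDegree_logPoly_le n, coeff_zero_logPoly n,
    fun θ _ => abs_re_eval_logPoly_le_one hn1 (hcircle θ), ?_, ⟨0, ?_, ?_⟩,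
    fun θ _ => by linarith [abs_im_eval_logPoly_le hn1 (hcircle θ)]⟩
  · rw [integral_Ico_re_eval_exp_mul_I, coeff_zero_logPoly, Complex.zero_re, mul_zero]
  · exact ⟨le_rfl, two_pi_pos⟩
  · simp only [Complex.ofReal_zero, zero_mul, Complex.exp_zero]
    linarith [log_sub_one_le_three_mul_abs_im_eval_logPoly_one hn1]
end
end

section
/- For an integer n ≥ 2 define the polynomial M_n(z) = (4/(iπ)) Σ_{k odd, 1 ≤ k ≤ n−1} (1 − k/n) z^k / k. Then: (i) |Re M_n(e^{iθ})| ≤ 1 for every θ ∈ [0,2π); and (ii) there is an absolute constant C > 0 such that |Im M_n(1)| ≥ (2/π) log n − C for all n ≥ 2. -/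
/-!
On the unit circle `Re M_n` is the Fejér mean `F_n * l` of the step function `l = ±1`, and
`n F_n(t) = |∑_{k<n} e^{ikt}|² ≥ 0` has mean `n`, so `|F_n * l| ≤ 1`. Without integrals: a primitive
`Φ` of `n F_n` is monotone with `Φ(θ + 2π) = Φ(θ) + 2nπ`, and
`Re M_n(e^{iθ}) = (Φ(θ) - Φ(θ - π) - nπ) / (nπ)`, which therefore lies in `[-1, 1]`.

At `z = 1`, `-Im M_n(1) = (4/π) ∑_{k<n odd} (1/k - 1/n)`, and the odd harmonic sum
`∑_{j<m} 1/(2j+1)` is at least `H_m / 2 ≥ log (m + 1) / 2`.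
-/

open MeasureTheory Polynomial Real Set

noncomputable section

/-- The polynomial `M_n(z) = (4/(iπ)) Σ_{k odd, 1 ≤ k ≤ n−1} (1 − k/n) z^k / k`,
which is the Fejér mean of the Herglotz transform of the step function
`l = 1` on `(0,π)`, `−1` on `(π,2π)`. -/
def fejerCauchyPoly (n : ℕ) : Polynomial ℂ :=
  Polynomial.C (4 / (Complex.I * (π : ℂ))) *
    ∑ k ∈ Finset.range n,
      if Odd k then Polynomial.C ((1 - (k : ℂ) / (n : ℂ)) / (k : ℂ)) * Polynomial.X ^ k
      else 0

open Finset

/-- `n` times the Fejér kernel `F_n(t) = ∑_{|k|<n} (1 - |k|/n) e^{ikt}`. -/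
def fejerKernel (n : ℕ) (t : ℝ) : ℝ :=
  2 * ∑ k ∈ range n, ((n : ℝ) - k) * cos (k * t) - n

theorem fejerKernel_succ (m : ℕ) (t : ℝ) :
    fejerKernel (m + 1) t = fejerKernel m t + 2 * ∑ k ∈ range (m + 1), cos (k * t) - 1 := by
  have hcoeff (k : ℝ) : ((m + 1 : ℕ) : ℝ) - k = ((m : ℝ) - k) + 1 := by push_cast; ring
  simp only [fejerKernel, hcoeff, add_mul, one_mul, sum_add_distrib, sum_range_succ, sub_self,
    zero_mul]
  push_cast
  ring

theorem fejerKernel_eq_sq_add_sq (n : ℕ) (t : ℝ) :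
    fejerKernel n t = (∑ k ∈ range n, cos (k * t)) ^ 2 + (∑ k ∈ range n, sin (k * t)) ^ 2 := by
  induction n with
  | zero => simp [fejerKernel]
  | succ m ih =>
    have hcross : (∑ k ∈ range m, cos (k * t)) * cos (m * t)
        + (∑ k ∈ range m, sin (k * t)) * sin (m * t) = ∑ k ∈ range m, cos ((k + 1 : ℕ) * t) := by
      rw [sum_mul, sum_mul, ← sum_add_distrib,
        ← sum_range_reflect (fun k => cos ((k + 1 : ℕ) * t))]
      refine sum_congr rfl fun k hk => ?_
      have hk : k < m := mem_range.mp hk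
      rw [← cos_sub, ← cos_neg, show m - 1 - k + 1 = m - k by omega, Nat.cast_sub hk.le]
      ring_nf
    have hshift := sum_range_succ' (fun k : ℕ => cos (k * t)) m
    rw [fejerKernel_succ, ih, sum_range_succ, sum_range_succ] at *
    simp only [Nat.cast_zero, zero_mul, cos_zero] at hshift
    linear_combination -2 * hcross + 2 * hshift - sin_sq_add_cos_sq ((m : ℝ) * t)

theorem fejerKernel_nonneg (n : ℕ) (t : ℝ) : 0 ≤ fejerKernel n t := by
  rw [fejerKernel_eq_sq_add_sq]
  positivity

def fejerPrimitive (n : ℕ) (θ : ℝ) : ℝ :=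
  n * θ + 2 * ∑ k ∈ range n, ((n : ℝ) - k) / k * sin (k * θ)

theorem hasDerivAt_fejerPrimitive (n : ℕ) (θ : ℝ) :
    HasDerivAt (fejerPrimitive n) (fejerKernel n θ) θ := by
  have hterm (k : ℕ) : HasDerivAt (fun x => ((n : ℝ) - k) / k * sin (k * x))
      (((n : ℝ) - k) / k * (cos (k * θ) * k)) θ :=
    ((hasDerivAt_sin _).comp θ (hasDerivAt_const_mul (k : ℝ))).const_mul _
  -- the `k = 0` summand on the left is `0` (as `n / 0 = 0`), that of `fejerKernel` is `2 * n`
  have hderiv : n * 1 + 2 * ∑ k ∈ range n, ((n : ℝ) - k) / k * (cos (k * θ) * k)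
      = fejerKernel n θ := by
    cases n with
    | zero => simp [fejerKernel]
    | succ m =>
      have hk (k : ℕ) : (((m + 1 : ℕ) : ℝ) - (k + 1 : ℕ)) / (k + 1 : ℕ) *
          (cos ((k + 1 : ℕ) * θ) * (k + 1 : ℕ)) =
          (((m + 1 : ℕ) : ℝ) - (k + 1 : ℕ)) * cos ((k + 1 : ℕ) * θ) := by
        field_simp
      simp only [fejerKernel, sum_range_succ' _ m, hk]
      simp
      ring
  exact (((hasDerivAt_id θ).const_mul (n : ℝ)).add
    ((HasDerivAt.fun_sum (u := range n) fun k _ => hterm k).const_mul 2)).congr_deriv hderiv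

theorem monotone_fejerPrimitive (n : ℕ) : Monotone (fejerPrimitive n) :=
  monotone_of_deriv_nonneg (fun θ => (hasDerivAt_fejerPrimitive n θ).differentiableAt)
    fun θ => (hasDerivAt_fejerPrimitive n θ).deriv ▸ fejerKernel_nonneg n θ

theorem fejerPrimitive_add_two_pi (n : ℕ) (θ : ℝ) :
    fejerPrimitive n (θ + 2 * π) = fejerPrimitive n θ + 2 * n * π := by
  have hsin (k : ℕ) : sin (k * (θ + 2 * π)) = sin (k * θ) := by
    rw [mul_add, sin_add_nat_mul_two_pi]
  simp only [fejerPrimitive, hsin]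
  ring

theorem fejerPrimitive_sub_fejerPrimitive_sub_pi (n : ℕ) (θ : ℝ) :
    fejerPrimitive n θ - fejerPrimitive n (θ - π)
      = n * π + 4 * ∑ k ∈ range n, if Odd k then ((n : ℝ) - k) / k * sin (k * θ) else 0 := by
  have hsin (k : ℕ) : sin (k * (θ - π)) = (-1) ^ k * sin (k * θ) := by
    rw [mul_sub, sin_sub_nat_mul_pi]
  have hodd (k : ℕ) : ((n : ℝ) - k) / k * sin (k * θ) - ((n : ℝ) - k) / k * ((-1) ^ k * sin (k * θ))
      = 2 * if Odd k then ((n : ℝ) - k) / k * sin (k * θ) else 0 := by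
    rcases k.even_or_odd with hk | hk
    · simp [hk.neg_one_pow, Nat.not_odd_iff_even.mpr hk]
    · simp only [hk.neg_one_pow, hk, if_true]
      ring
  simp only [fejerPrimitive, hsin]
  rw [add_sub_add_comm, ← mul_sub (2 : ℝ), ← sum_sub_distrib]
  simp only [hodd, ← mul_sum]
  ring

theorem fejerCauchyPoly_eval (n : ℕ) (z : ℂ) :
    (fejerCauchyPoly n).eval z = -(4 / π) * Complex.I *
      ∑ k ∈ range n, if Odd k then (((1 - (k : ℝ) / n) / k : ℝ) : ℂ) * z ^ k else 0 := by
  have hcoeff : 4 / (Complex.I * π) = -(4 / π) * Complex.I := by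
    rw [mul_comm, ← div_div, Complex.div_I]
    ring
  simp [fejerCauchyPoly, eval_finsetSum, apply_ite, hcoeff]

theorem fejerCauchyPoly_eval_exp_re (n : ℕ) (θ : ℝ) :
    ((fejerCauchyPoly n).eval (Complex.exp (θ * Complex.I))).re
      = 4 / π * ∑ k ∈ range n, if Odd k then (1 - (k : ℝ) / n) / k * sin (k * θ) else 0 := by
  simp [fejerCauchyPoly_eval, ← Complex.exp_nat_mul, Complex.im_sum, apply_ite, ← mul_assoc,
    Complex.exp_re, Complex.exp_im]

theorem fejerCauchyPoly_eval_one_im (n : ℕ) :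
    ((fejerCauchyPoly n).eval 1).im
      = -(4 / π * ∑ k ∈ range n, if Odd k then (1 - (k : ℝ) / n) / k else 0) := by
  simp [fejerCauchyPoly_eval, Complex.re_sum, apply_ite]

/-- This is `Re M_n = F_n * l`: the two differences `Φ(θ) - Φ(θ - π)` and
`Φ(θ + π) - Φ(θ) = 2nπ - (Φ(θ) - Φ(θ - π))` are the integrals of `n F_n(θ - ·)` over `(0, π)`
and `(π, 2π)`. -/
theorem fejerCauchyPoly_eval_exp_re_eq (n : ℕ) (hn : n ≠ 0) (θ : ℝ) :
    ((fejerCauchyPoly n).eval (Complex.exp (θ * Complex.I))).re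
      = (fejerPrimitive n θ - fejerPrimitive n (θ - π) - n * π) / (n * π) := by
  have hn' : (n : ℝ) ≠ 0 := Nat.cast_ne_zero.mpr hn
  have hsum : ∑ k ∈ range n, (if Odd k then (1 - (k : ℝ) / n) / k * sin (k * θ) else 0)
      = (∑ k ∈ range n, if Odd k then ((n : ℝ) - k) / k * sin (k * θ) else 0) / n := by
    rw [sum_div]
    refine sum_congr rfl fun k _ => ?_
    split_ifs
    · field_simp
    · simp
  rw [fejerCauchyPoly_eval_exp_re, hsum, fejerPrimitive_sub_fejerPrimitive_sub_pi,
    add_sub_cancel_left]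
  ring

theorem abs_fejerCauchyPoly_eval_exp_re_le_one (n : ℕ) (θ : ℝ) :
    |((fejerCauchyPoly n).eval (Complex.exp (θ * Complex.I))).re| ≤ 1 := by
  rcases eq_or_ne n 0 with rfl | hn
  · simp [fejerCauchyPoly]
  have hnπ : 0 < (n : ℝ) * π := by positivity
  have hlower : fejerPrimitive n (θ - π) ≤ fejerPrimitive n θ :=
    monotone_fejerPrimitive n (by linarith [pi_pos])
  have hupper : fejerPrimitive n θ ≤ fejerPrimitive n (θ - π + 2 * π) :=
    monotone_fejerPrimitive n (by linarith [pi_pos])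
  rw [fejerPrimitive_add_two_pi] at hupper
  rw [fejerCauchyPoly_eval_exp_re_eq n hn, abs_div, abs_of_pos hnπ, div_le_one hnπ, abs_le]
  constructor <;> linarith

theorem sum_range_ite_odd {M : Type*} [AddCommMonoid M] (f : ℕ → M) (n : ℕ) :
    ∑ k ∈ range n, (if Odd k then f k else 0) = ∑ j ∈ range (n / 2), f (2 * j + 1) := by
  induction n with
  | zero => simp
  | succ n ih =>
    rw [sum_range_succ, ih]
    rcases n.even_or_odd with ⟨m, rfl⟩ | ⟨m, rfl⟩
    · rw [if_neg (by simp), add_zero, show (m + m + 1) / 2 = (m + m) / 2 by omega]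
    · rw [if_pos (by simp), show (2 * m + 1 + 1) / 2 = m + 1 by omega,
        show (2 * m + 1) / 2 = m by omega, sum_range_succ]

theorem log_add_one_le_two_mul_sum_inv_odd (m : ℕ) :
    log (m + 1) ≤ 2 * ∑ j ∈ range m, 1 / (2 * (j : ℝ) + 1) := by
  calc log (m + 1) ≤ harmonic m := by exact_mod_cast log_add_one_le_harmonic m
    _ = ∑ j ∈ range m, 1 / ((j : ℝ) + 1) := by simp [harmonic]
    _ ≤ 2 * ∑ j ∈ range m, 1 / (2 * (j : ℝ) + 1) := by
      rw [mul_sum]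
      gcongr with j
      rw [mul_one_div, div_le_div_iff₀ (by positivity) (by positivity)]
      linarith

theorem log_sub_le_two_mul_sum_odd (n : ℕ) (hn : n ≠ 0) :
    log n - (1 + log 2) ≤ 2 * ∑ k ∈ range n, if Odd k then (1 - (k : ℝ) / n) / k else 0 := by
  have hn' : (n : ℝ) ≠ 0 := Nat.cast_ne_zero.mpr hn
  have hterm (j : ℕ) : (1 - ((2 * j + 1 : ℕ) : ℝ) / n) / (2 * j + 1 : ℕ)
      = 1 / (2 * (j : ℝ) + 1) - 1 / n := by
    push_cast
    field_simp
  have hhalf : ((n / 2 : ℕ) : ℝ) * (1 / n) ≤ 1 / 2 := by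
    rw [mul_one_div, div_le_div_iff₀ (by positivity) (by norm_num), one_mul]
    exact_mod_cast Nat.div_mul_le_self n 2
  have hlog : log n ≤ log 2 + log ((n / 2 : ℕ) + 1) := by
    rw [← log_mul two_ne_zero (by positivity)]
    gcongr
    have : n ≤ 2 * (n / 2 + 1) := by omega
    exact_mod_cast this
  rw [sum_range_ite_odd (fun k => (1 - (k : ℝ) / n) / k), sum_congr rfl fun j _ => hterm j,
    sum_sub_distrib, sum_const, card_range, nsmul_eq_mul]
  linarith [log_add_one_le_two_mul_sum_inv_odd (n / 2)]

/-- On the unit circle, `|Re M_n| ≤ 1`, while the imaginary part at `z = 1` is at least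
`(2/π) log n − C` for an absolute constant `C`. -/
theorem fejerCauchyPoly_properties :
    (∀ n : ℕ, 2 ≤ n → ∀ θ : ℝ,
      |((fejerCauchyPoly n).eval (Complex.exp (θ * Complex.I))).re| ≤ 1) ∧
    ∃ C : ℝ, 0 < C ∧ ∀ n : ℕ, 2 ≤ n →
      (2 / π) * Real.log n - C ≤ |((fejerCauchyPoly n).eval 1).im| := by
  refine ⟨fun n _ θ => abs_fejerCauchyPoly_eval_exp_re_le_one n θ,
    2 / π * (1 + log 2), by positivity, fun n hn => ?_⟩
  rw [fejerCauchyPoly_eval_one_im, abs_neg]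
  calc 2 / π * log n - 2 / π * (1 + log 2)
      = 2 / π * (log n - (1 + log 2)) := by ring
    _ ≤ 2 / π * (2 * ∑ k ∈ range n, if Odd k then (1 - (k : ℝ) / n) / k else 0) := by
      gcongr
      exact log_sub_le_two_mul_sum_odd n (by omega)
    _ ≤ _ := by
      rw [← mul_assoc, show 2 / π * 2 = 4 / π by ring]
      exact le_abs_self _
end
end
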